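/- arXiv:2602.17148 — 12 statements merged into one kernel-verified Lean document; each statement's English description precedes it below -/
import Mathlib

section
/- Let F = F_{2^n} be a finite field of characteristic 2. If f ∈ Ω_0, i.e. f : F → F is a bijection satisfying (★) with f(0) = 0, then f is an involution: f(f(x)) = x for all x ∈ F. -/
/-- Equation (★): `f(x) + f(x + f(y)) = f(x + f(y + f(x)))` for all `x, y`. -/
def StarEq {F : Type*} [Field F] (f : F → F) : Prop :=
  ∀ x y : F, f x + f (x + f y) = f (x + f (y + f x))

/-- If `f ∈ Ω_0` (a bijection satisfying (★) with `f(0) = 0`) over a finite field of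
characteristic 2, then `f` is an involution. -/
theorem stmt3 {F : Type*} [Field F] [Fintype F] [CharP F 2] (f : F → F)
    (hbij : Function.Bijective f) (hstar : StarEq f) (h0 : f 0 = 0) :
    ∀ x : F, f (f x) = x := by
  intro x
  have h := hstar x 0
  rw [h0, add_zero, zero_add, CharTwo.add_self_eq_zero] at h
  have := hbij.1 (h.symm.trans h0.symm)
  have hx : x + f (f x) = 0 := this
  have h2 : f (f x) = -x := by linear_combination hx
  rw [h2, CharTwo.neg_eq]
end

section
/- Let F = F_{2^n} be a finite field of characteristic 2 and let w, z be two distinct nonzero elements of F. Let f : F → F be the single transposition [w z], i.e. f(w) = z, f(z) = w, and f(x) = x for all x ∉ {w, z}. Then f ∈ Ω_0, i.e. f is a bijection with f(0) = 0 satisfying (★) for all x, y ∈ F. -/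
/-- If `f` is the single transposition `[w z]` of two distinct nonzero elements,
then `f ∈ Ω_0`: it is a bijection with `f(0) = 0` satisfying (★). -/
theorem stmt4 {F : Type*} [Field F] [Fintype F] [CharP F 2] (w z : F)
    (hw : w ≠ 0) (hz : z ≠ 0) (hwz : w ≠ z) (f : F → F)
    (hfw : f w = z) (hfz : f z = w) (hother : ∀ x : F, x ≠ w → x ≠ z → f x = x) :
    Function.Bijective f ∧ f 0 = 0 ∧ StarEq f := by
  have h2 : (2 : F) = 0 := by
    have := CharP.cast_eq_zero F 2
    simpa using this
  classical
  set c : F := w + z with hc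
  set e : F → F := fun u => if u = w ∨ u = z then c else 0 with he
  -- f u = u + e u
  have hf : ∀ u : F, f u = u + e u := by
    intro u
    by_cases h1 : u = w
    · subst h1
      simp only [he, hc, if_pos (Or.inl rfl), hfw]
      linear_combination (-u) * h2
    · by_cases h3 : u = z
      · subst h3
        simp only [he, hc, if_pos (Or.inr rfl), hfz]
        linear_combination (-u) * h2
      · simp only [he, if_neg (by tauto : ¬(u = w ∨ u = z)), hother u h1 h3, add_zero]
  -- shift lemma
  have hshiftc : ∀ u : F, e (u + c) = e u := by
    intro u
    simp only [he]
    have hiff : (u + c = w ∨ u + c = z) ↔ (u = w ∨ u = z) := by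
      constructor
      · rintro (h | h)
        · right; linear_combination h - z * h2
        · left; linear_combination h - w * h2
      · rintro (h | h)
        · right; linear_combination h + w * h2
        · left; linear_combination h + z * h2
    simp [hiff]
  have hshift : ∀ u v : F, e (u + e v) = e u := by
    intro u v
    by_cases hv : v = w ∨ v = z
    · rw [show e v = c from by simp [he, hv]]
      exact hshiftc u
    · rw [show e v = 0 from by simp [he, hv], add_zero]
  -- involutive
  have hinv : Function.Involutive f := by
    intro u
    by_cases h1 : u = w
    · subst h1; rw [hfw, hfz]
    · by_cases h3 : u = z
      · subst h3; rw [hfz, hfw]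
      · rw [hother u h1 h3, hother u h1 h3]
  refine ⟨hinv.bijective, hother 0 (Ne.symm hw) (Ne.symm hz), ?_⟩
  intro x y
  simp only [hf]
  have h1 : e (x + (y + e y)) = e (x + y) := by
    rw [← add_assoc]; exact hshift (x + y) y
  have h2' : e (y + (x + e x)) = e (x + y) := by
    rw [← add_assoc, add_comm y x]; exact hshift (x + y) x
  rw [h1, h2']
  have h3 : e (x + (y + (x + e x) + e (x + y))) = e y := by
    have harg : x + (y + (x + e x) + e (x + y)) = (y + e (x + y)) + e x := by
      linear_combination x * h2
    rw [harg, hshift, hshift]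
  rw [h3]
  ring
end

section
/- Let F = F_{2^n} be a finite field of characteristic 2, let m ∈ F, and let k ∈ F be nonzero with k ≠ m. Suppose f : F → F is a bijection satisfying f(0) = 0, f(m) = m, f(k) = k + m, f(k + m) = k, and f(x) = x + k for all x ∉ {0, m, k, k + m}. Then f ∈ Ω_0, i.e. f satisfies (★) for all x, y ∈ F. -/
/-- If `f` is a bijection with `f(0)=0`, `f(m)=m`, `f(k)=k+m`, `f(k+m)=k` and
`f(x)=x+k` elsewhere (with `k ≠ 0`, `k ≠ m`), then `f ∈ Ω_0`, i.e. `f` satisfies (★). -/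
theorem stmt6 {F : Type*} [Field F] [Fintype F] [CharP F 2] (m k : F)
    (hk0 : k ≠ 0) (hkm : k ≠ m) (f : F → F) (hbij : Function.Bijective f)
    (h0 : f 0 = 0) (hm : f m = m) (hfk : f k = k + m) (hfkm : f (k + m) = k)
    (hother : ∀ x : F, x ∉ ({0, m, k, k + m} : Set F) → f x = x + k) :
    StarEq f := by
  have h20 : (2 : F) = 0 := by exact_mod_cast (CharP.cast_eq_zero F 2)
  set V : Set F := {0, m, k, k + m} with hVdef
  have memV : ∀ z : F, z ∈ V ↔ (z = 0 ∨ z = m ∨ z = k ∨ z = k + m) := by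
    intro z; simp [hVdef]
  have hVadd : ∀ a b : F, a ∈ V → b ∈ V → a + b ∈ V := by
    intro a b ha hb
    rw [memV] at ha hb ⊢
    rcases ha with ha | ha | ha | ha <;> rw [ha] <;>
        rcases hb with hb | hb | hb | hb <;> rw [hb]
    · left; ring
    · right; left; ring
    · right; right; left; ring
    · right; right; right; ring
    · right; left; ring
    · left; linear_combination m * h20
    · right; right; right; ring
    · right; right; left; linear_combination m * h20
    · right; right; left; ring
    · right; right; right; ring
    · left; linear_combination k * h20
    · right; left; linear_combination k * h20
    · right; right; right; ring
    · right; right; left; linear_combination m * h20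
    · right; left; linear_combination k * h20
    · left; linear_combination (k + m) * h20
  have hVnadd : ∀ a b : F, a ∉ V → b ∈ V → a + b ∉ V := by
    intro a b ha hb h
    have h' := hVadd _ _ h hb
    rw [show a + b + b = a by linear_combination b * h20] at h'
    exact ha h'
  have zeroV : (0 : F) ∈ V := by rw [memV]; left; rfl
  have mV : m ∈ V := by rw [memV]; right; left; rfl
  have kV : k ∈ V := by rw [memV]; right; right; left; rfl
  have memW : ∀ A : F, (A = 0 ∨ A = m) → A ∈ V := by
    rintro A (rfl | rfl); exacts [zeroV, mV]
  have hfV : ∀ z : F, z ∈ V → f z = z ∨ f z = z + m := by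
    intro z hz; rw [memV] at hz
    rcases hz with hz | hz | hz | hz <;> rw [hz]
    · left; exact h0
    · left; exact hm
    · right; exact hfk
    · right; rw [hfkm]; linear_combination (-m) * h20
  have hL1 : ∀ z : F, f (z + m) = f z + m := by
    intro z
    by_cases hz : z ∈ V
    · rw [memV] at hz
      rcases hz with hz | hz | hz | hz <;> rw [hz]
      · rw [zero_add, hm, h0, zero_add]
      · rw [show m + m = (0 : F) by linear_combination m * h20, h0, hm]
        linear_combination (-m) * h20
      · rw [hfkm, hfk]; linear_combination (-m) * h20
      · rw [show k + m + m = k by linear_combination m * h20, hfk, hfkm]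
    · have h1 : z + m ∉ V := hVnadd z m hz mV
      rw [hother _ h1, hother _ hz]; ring
  have hLW : ∀ z w : F, (w = 0 ∨ w = m) → f (z + w) = f z + w := by
    rintro z w (rfl | rfl)
    · rw [add_zero, add_zero]
    · exact hL1 z
  have hfV' : ∀ z : F, z ∈ V → ∃ A : F, (A = 0 ∨ A = m) ∧ f z = z + A := by
    intro z hz
    rcases hfV z hz with h | h
    · exact ⟨0, Or.inl rfl, by rw [h, add_zero]⟩
    · exact ⟨m, Or.inr rfl, h⟩
  intro x y
  by_cases hx : x ∈ V <;> by_cases hy : y ∈ V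
  · -- x ∈ V, y ∈ V
    obtain ⟨A, hA, hfx⟩ := hfV' x hx
    obtain ⟨B, hB, hfy⟩ := hfV' y hy
    rw [hfx, hfy]
    rw [show x + (y + B) = (x + y) + B by ring, hLW _ _ hB]
    obtain ⟨C, hC, hfxy⟩ := hfV' (x + y) (hVadd _ _ hx hy)
    rw [hfxy]
    rw [show y + (x + A) = (x + y) + A by ring, hLW _ _ hA, hfxy]
    rw [show x + (x + y + C + A) = y + (C + A) by linear_combination x * h20]
    have hCA : C + A = 0 ∨ C + A = m := by
      rcases hA with hA | hA <;> rcases hC with hC | hC <;> rw [hA, hC]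
      · left; ring
      · right; ring
      · right; ring
      · left; linear_combination m * h20
    rw [hLW _ _ hCA, hfy]
    linear_combination x * h20
  · -- x ∈ V, y ∉ V
    obtain ⟨A, hA, hfx⟩ := hfV' x hx
    have hAV : A ∈ V := memW A hA
    rw [hfx, hother y hy]
    rw [show x + (y + k) = y + (x + k) by ring,
      hother _ (hVnadd y (x + k) hy (hVadd x k hx kV))]
    rw [hother _ (hVnadd y (x + A) hy (hVadd x A hx hAV))]
    rw [show x + (y + (x + A) + k) = y + (A + k) by linear_combination x * h20,
      hother _ (hVnadd y (A + k) hy (hVadd A k hAV kV))]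
    linear_combination x * h20
  · -- x ∉ V, y ∈ V
    obtain ⟨B, hB, hfy⟩ := hfV' y hy
    have hBV : B ∈ V := memW B hB
    rw [hother x hx, hfy]
    rw [hother _ (hVnadd x (y + B) hx (hVadd y B hy hBV))]
    rw [show y + (x + k) = x + (y + k) by ring,
      hother _ (hVnadd x (y + k) hx (hVadd y k hy kV))]
    rw [show x + (x + (y + k) + k) = y by linear_combination (x + k) * h20, hfy]
    linear_combination (x + k) * h20
  · -- x ∉ V, y ∉ V
    rw [hother x hx, hother y hy]
    rw [show y + (x + k) = x + (y + k) by ring]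
    by_cases hp : x + (y + k) ∈ V
    · obtain ⟨C, hC, hfp⟩ := hfV' _ hp
      rw [hfp]
      rw [show x + (x + (y + k) + C) = y + (k + C) by linear_combination x * h20,
        hother _ (hVnadd y (k + C) hy (hVadd k C kV (memW C hC)))]
      linear_combination x * h20
    · rw [hother _ hp]
      rw [show x + (x + (y + k) + k) = y by linear_combination (x + k) * h20,
        hother y hy]
      linear_combination (x + k) * h20
end

section
/- Let F₄ be the finite field with 4 elements. The set Ω_0 of bijective maps f : F₄ → F₄ with f(0) = 0 satisfying (★) has exactly 4 elements, and every f ∈ Ω_0 satisfies f(f(x)) = x for all x and f(x + y) = f(x) + f(y) for all x, y (i.e. every element of Ω_0 is an additive involution). -/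
/-- `Ω_0`: bijective maps satisfying (★) with `f(0) = 0`. -/
def Omega0 (F : Type*) [Field F] : Set (F → F) :=
  {f | Function.Bijective f ∧ StarEq f ∧ f 0 = 0}

section Aux

variable {F : Type*} [Field F]

/-- Any additive involution satisfies (★). -/
lemma starEq_of_addinv {f : F → F} (hadd : ∀ x y, f (x + y) = f x + f y)
    (hinv : ∀ x, f (f x) = x) : StarEq f := by
  intro x y
  simp only [hadd, hinv]
  ring

end Aux

noncomputable instance : Fintype (GaloisField 2 2) := Fintype.ofFinite _

lemma F4card : Fintype.card (GaloisField 2 2) = 4 := by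
  have := GaloisField.card 2 2 (by norm_num)
  rwa [Nat.card_eq_fintype_card] at this

lemma F4two : (2 : GaloisField 2 2) = 0 := by
  exact_mod_cast CharP.cast_eq_zero (GaloisField 2 2) 2

lemma F4cube {x : GaloisField 2 2} (hx : x ≠ 0) : x ^ 3 = 1 := by
  have := FiniteField.pow_card_sub_one_eq_one x hx
  rwa [F4card] at this

lemma F4addone {x : GaloisField 2 2} (hx1 : x ≠ 1) : x + 1 ≠ 0 := by
  intro h
  exact hx1 (by linear_combination h - F4two)

/-- key quadratic relation for elements outside {0,1} -/
lemma F4quad {x : GaloisField 2 2} (hx0 : x ≠ 0) (hx1 : x ≠ 1) :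
    x ^ 2 = x + 1 := by
  have h3 := F4cube hx0
  have hfac : (x + 1) * (x ^ 2 + x + 1) = x ^ 3 + 1 + (x ^ 2 + x + 1) * 2 - 2 := by ring
  rw [h3, F4two] at hfac
  have h0 : (x + 1) * (x ^ 2 + x + 1) = 0 := by linear_combination hfac + F4two
  rcases mul_eq_zero.1 h0 with h | h
  · exact absurd h (F4addone hx1)
  · linear_combination h - (x + 1) * F4two

/-- every element of F4 is 0, 1, a or a+1 -/
lemma F4univ {a : GaloisField 2 2} (ha0 : a ≠ 0) (ha1 : a ≠ 1) (x : GaloisField 2 2) :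
    x = 0 ∨ x = 1 ∨ x = a ∨ x = a + 1 := by
  classical
  by_contra h
  push_neg at h
  obtain ⟨h0, h1, h2, h3⟩ := h
  have hb0 : a + 1 ≠ 0 := F4addone ha1
  have hb1 : a + 1 ≠ 1 := by
    intro h; exact ha0 (by linear_combination h)
  have hba : a + 1 ≠ a := by
    intro h; exact one_ne_zero (by linear_combination h : (1 : GaloisField 2 2) = 0)
  have hsub : ({x, 0, 1, a, a + 1} : Finset (GaloisField 2 2)) ⊆ Finset.univ :=
    Finset.subset_univ _
  have hcard : ({x, 0, 1, a, a + 1} : Finset (GaloisField 2 2)).card = 5 := by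
    rw [Finset.card_insert_of_notMem (by simp [h0, h1, h2, h3]),
        Finset.card_insert_of_notMem (by simp [zero_ne_one, ha0.symm, hb0.symm]),
        Finset.card_insert_of_notMem (by simp [ha1.symm, hb1.symm]),
        Finset.card_insert_of_notMem (by simp [hba.symm]),
        Finset.card_singleton]
  have := Finset.card_le_card hsub
  rw [hcard, Finset.card_univ, F4card] at this
  omega

lemma F4pow4 (x : GaloisField 2 2) : x ^ 4 = x := by
  have := FiniteField.pow_card x
  rwa [F4card] at this

lemma qmap_add (c x y : GaloisField 2 2) : c * (x + y) ^ 2 = c * x ^ 2 + c * y ^ 2 := by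
  linear_combination c * x * y * F4two

lemma qmap_inv {c : GaloisField 2 2} (hc : c ≠ 0) (x : GaloisField 2 2) :
    c * (c * x ^ 2) ^ 2 = x := by
  linear_combination x ^ 4 * F4cube hc + F4pow4 x

lemma F4exists_a : ∃ a : GaloisField 2 2, a ≠ 0 ∧ a ≠ 1 := by
  classical
  by_contra h
  push_neg at h
  have hsub : (Finset.univ : Finset (GaloisField 2 2)) ⊆ {0, 1} := by
    intro x _
    by_cases hx : x = 0
    · simp [hx]
    · simp [h x hx]
  have hle := Finset.card_le_card hsub
  rw [Finset.card_univ, F4card] at hle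
  have : ({0, 1} : Finset (GaloisField 2 2)).card ≤ 2 := Finset.card_insert_le _ _
  omega

lemma F4classify {a : GaloisField 2 2} (ha0 : a ≠ 0) (ha1 : a ≠ 1)
    {f : GaloisField 2 2 → GaloisField 2 2} (hf : f ∈ Omega0 (GaloisField 2 2)) :
    f = (fun x => x) ∨ f = (fun x => x ^ 2) ∨ f = (fun x => a * x ^ 2) ∨
      f = (fun x => (a + 1) * x ^ 2) := by
  obtain ⟨hbij, hstar, h0⟩ := hf
  have inj := hbij.injective
  have hb0 : a + 1 ≠ 0 := F4addone ha1
  have hsq : a ^ 2 = a + 1 := F4quad ha0 ha1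
  have hbsq : (a + 1) ^ 2 = a := by linear_combination hsq + (a + 1) * F4two
  have ha3 : a ^ 3 = 1 := F4cube ha0
  have hb3 : (a + 1) ^ 3 = 1 := F4cube hb0
  have e2 : (1 : GaloisField 2 2) + 1 = 0 := by linear_combination F4two
  have hval : ∀ g : GaloisField 2 2 → GaloisField 2 2, g 0 = 0 → f 1 = g 1 →
      f a = g a → f (a + 1) = g (a + 1) → f = g := by
    intro g hg h1 h2 h3
    funext x
    rcases F4univ ha0 ha1 x with rfl | rfl | rfl | rfl
    · rw [h0, hg]
    · exact h1
    · exact h2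
    · exact h3
  rcases F4univ ha0 ha1 (f 1) with h1 | h1 | h1 | h1
  · exact absurd (inj (h1.trans h0.symm)) one_ne_zero
  · -- f 1 = 1
    rcases F4univ ha0 ha1 (f a) with h2 | h2 | h2 | h2
    · exact absurd (inj (h2.trans h0.symm)) ha0
    · exact absurd (inj (h2.trans h1.symm)) ha1
    · -- f a = a, so f (a+1) = a+1, f = id
      rcases F4univ ha0 ha1 (f (a + 1)) with h3 | h3 | h3 | h3
      · exact absurd (inj (h3.trans h0.symm)) hb0
      · exact absurd ha0 (fun h => h (by linear_combination inj (h3.trans h1.symm)))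
      · exact absurd (one_ne_zero (α := GaloisField 2 2))
          (fun h => h (by linear_combination inj (h3.trans h2.symm)))
      · exact Or.inl (hval _ rfl h1 h2 h3)
    · -- f a = a+1, so f (a+1) = a, f = x^2
      rcases F4univ ha0 ha1 (f (a + 1)) with h3 | h3 | h3 | h3
      · exact absurd (inj (h3.trans h0.symm)) hb0
      · exact absurd ha0 (fun h => h (by linear_combination inj (h3.trans h1.symm)))
      · refine Or.inr (Or.inl (hval _ (by norm_num) ?_ ?_ ?_))
        · rw [h1, one_pow]
        · rw [h2, hsq]
        · rw [h3, hbsq]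
      · exact absurd (one_ne_zero (α := GaloisField 2 2))
          (fun h => h (by linear_combination inj (h3.trans h2.symm)))
  · -- f 1 = a
    rcases F4univ ha0 ha1 (f a) with h2 | h2 | h2 | h2
    · exact absurd (inj (h2.trans h0.symm)) ha0
    · -- f a = 1, f (a+1) = a+1, f = a*x^2
      rcases F4univ ha0 ha1 (f (a + 1)) with h3 | h3 | h3 | h3
      · exact absurd (inj (h3.trans h0.symm)) hb0
      · exact absurd (one_ne_zero (α := GaloisField 2 2))
          (fun h => h (by linear_combination inj (h3.trans h2.symm)))
      · exact absurd ha0 (fun h => h (by linear_combination inj (h3.trans h1.symm)))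
      · refine Or.inr (Or.inr (Or.inl (hval _ (by norm_num) ?_ ?_ ?_)))
        · rw [h1]; ring
        · rw [h2]; linear_combination -ha3
        · rw [h3]; linear_combination -a * hbsq - hsq
    · exact absurd (inj (h2.trans h1.symm)) ha1
    · -- f a = a+1, so f (a+1) = 1, contradiction via star
      rcases F4univ ha0 ha1 (f (a + 1)) with h3 | h3 | h3 | h3
      · exact absurd (inj (h3.trans h0.symm)) hb0
      · have key := hstar 1 1
        rw [h1] at key
        have e : (1 : GaloisField 2 2) + a = a + 1 := by ring
        rw [e, h3] at key
        rw [e2, h0] at key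
        exact absurd key hb0
      · exact absurd ha0 (fun h => h (by linear_combination inj (h3.trans h1.symm)))
      · exact absurd (one_ne_zero (α := GaloisField 2 2))
          (fun h => h (by linear_combination inj (h3.trans h2.symm)))
  · -- f 1 = a+1
    rcases F4univ ha0 ha1 (f a) with h2 | h2 | h2 | h2
    · exact absurd (inj (h2.trans h0.symm)) ha0
    · -- f a = 1, f (a+1) = a, contradiction via star
      rcases F4univ ha0 ha1 (f (a + 1)) with h3 | h3 | h3 | h3
      · exact absurd (inj (h3.trans h0.symm)) hb0
      · exact absurd (one_ne_zero (α := GaloisField 2 2))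
          (fun h => h (by linear_combination inj (h3.trans h2.symm)))
      · have key := hstar 1 1
        rw [h1] at key
        have e : (1 : GaloisField 2 2) + (a + 1) = a := by linear_combination F4two
        rw [e, h2] at key
        rw [e2, h0] at key
        exact absurd (by linear_combination key - F4two : a = 0) ha0
      · exact absurd ha0 (fun h => h (by linear_combination inj (h3.trans h1.symm)))
    · -- f a = a, f (a+1) = 1, f = (a+1)*x^2
      rcases F4univ ha0 ha1 (f (a + 1)) with h3 | h3 | h3 | h3
      · exact absurd (inj (h3.trans h0.symm)) hb0
      · refine Or.inr (Or.inr (Or.inr (hval _ (by norm_num) ?_ ?_ ?_)))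
        · rw [h1]; ring
        · rw [h2]; linear_combination -(a + 1) * hsq - hbsq
        · rw [h3]; linear_combination -hb3
      · exact absurd (one_ne_zero (α := GaloisField 2 2))
          (fun h => h (by linear_combination inj (h3.trans h2.symm)))
      · exact absurd ha0 (fun h => h (by linear_combination inj (h3.trans h1.symm)))
    · exact absurd (inj (h2.trans h1.symm)) ha1

lemma qmem {c : GaloisField 2 2} (hc : c ≠ 0) :
    (fun x => c * x ^ 2) ∈ Omega0 (GaloisField 2 2) ∧
      (∀ x, c * (c * x ^ 2) ^ 2 = x) ∧
      (∀ x y : GaloisField 2 2, c * (x + y) ^ 2 = c * x ^ 2 + c * y ^ 2) := by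
  have hinv : Function.Involutive (fun x : GaloisField 2 2 => c * x ^ 2) :=
    fun x => qmap_inv hc x
  exact ⟨⟨hinv.bijective, starEq_of_addinv (fun x y => qmap_add c x y) hinv, by norm_num⟩,
    fun x => qmap_inv hc x, fun x y => qmap_add c x y⟩

/-- Over `F₄`, `Ω_0` has exactly 4 elements and every element of `Ω_0` is an additive
involution. -/
theorem stmt8 :
    Nat.card (Omega0 (GaloisField 2 2)) = 4 ∧
    ∀ f ∈ Omega0 (GaloisField 2 2),
      (∀ x, f (f x) = x) ∧ (∀ x y, f (x + y) = f x + f y) := by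
  obtain ⟨a, ha0, ha1⟩ := F4exists_a
  have hb0 : a + 1 ≠ 0 := F4addone ha1
  have hsq : a ^ 2 = a + 1 := F4quad ha0 ha1
  -- the four maps
  have hinv2 : ∀ x : GaloisField 2 2, (x ^ 2) ^ 2 = x := fun x => by
    linear_combination F4pow4 x
  have hadd2 : ∀ x y : GaloisField 2 2, (x + y) ^ 2 = x ^ 2 + y ^ 2 := fun x y => by
    linear_combination x * y * F4two
  have hmem2 : (fun x : GaloisField 2 2 => x ^ 2) ∈ Omega0 (GaloisField 2 2) := by
    have hinv : Function.Involutive (fun x : GaloisField 2 2 => x ^ 2) := hinv2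
    exact ⟨hinv.bijective, starEq_of_addinv hadd2 hinv, by norm_num⟩
  have hmem1 : (fun x : GaloisField 2 2 => x) ∈ Omega0 (GaloisField 2 2) :=
    ⟨Function.bijective_id, starEq_of_addinv (fun _ _ => rfl) (fun _ => rfl), rfl⟩
  have hSeq : Omega0 (GaloisField 2 2) =
      ({fun x => x, fun x => x ^ 2, fun x => a * x ^ 2, fun x => (a + 1) * x ^ 2} :
        Set (GaloisField 2 2 → GaloisField 2 2)) := by
    ext f
    constructor
    · intro hf
      rcases F4classify ha0 ha1 hf with h | h | h | h <;> simp [h]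
    · intro hf
      rcases hf with h | h | h | h <;> subst h
      · exact hmem1
      · exact hmem2
      · exact (qmem ha0).1
      · exact (qmem hb0).1
  constructor
  · -- cardinality
    have h12 : (fun x : GaloisField 2 2 => x) ≠ fun x => x ^ 2 := by
      intro h
      have e : a = a ^ 2 := congrFun h a
      exact one_ne_zero (α := GaloisField 2 2) (by linear_combination -e - hsq)
    have h13 : (fun x : GaloisField 2 2 => x) ≠ fun x => a * x ^ 2 := by
      intro h
      have e : (1 : GaloisField 2 2) = a * 1 ^ 2 := congrFun h 1
      exact ha1 (by linear_combination -e)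
    have h14 : (fun x : GaloisField 2 2 => x) ≠ fun x => (a + 1) * x ^ 2 := by
      intro h
      have e : (1 : GaloisField 2 2) = (a + 1) * 1 ^ 2 := congrFun h 1
      exact ha0 (by linear_combination -e)
    have h23 : (fun x : GaloisField 2 2 => x ^ 2) ≠ fun x => a * x ^ 2 := by
      intro h
      have e : (1 : GaloisField 2 2) ^ 2 = a * 1 ^ 2 := congrFun h 1
      exact ha1 (by linear_combination -e)
    have h24 : (fun x : GaloisField 2 2 => x ^ 2) ≠ fun x => (a + 1) * x ^ 2 := by
      intro h
      have e : (1 : GaloisField 2 2) ^ 2 = (a + 1) * 1 ^ 2 := congrFun h 1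
      exact ha0 (by linear_combination -e)
    have h34 : (fun x : GaloisField 2 2 => a * x ^ 2) ≠ fun x => (a + 1) * x ^ 2 := by
      intro h
      have e : a * (1 : GaloisField 2 2) ^ 2 = (a + 1) * 1 ^ 2 := congrFun h 1
      exact one_ne_zero (α := GaloisField 2 2) (by linear_combination -e)
    rw [hSeq, Nat.card_coe_set_eq,
      Set.ncard_insert_of_notMem (by simp [h12, h13, h14]),
      Set.ncard_insert_of_notMem (by simp [h23, h24]),
      Set.ncard_pair h34]
  · intro f hf
    rcases F4classify ha0 ha1 hf with h | h | h | h <;> subst h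
    · exact ⟨fun _ => rfl, fun _ _ => rfl⟩
    · exact ⟨hinv2, hadd2⟩
    · exact ⟨(qmem ha0).2.1, (qmem ha0).2.2⟩
    · exact ⟨(qmem hb0).2.1, (qmem hb0).2.2⟩
end

section
/- Let F₈ be the finite field with 8 elements and let f ∈ Ω_0 be a product of exactly two disjoint transpositions, i.e. f is a bijection with f(0) = 0 satisfying (★) whose fixed-point set has exactly 4 elements. Then f is additive: f(x + y) = f(x) + f(y) for all x, y ∈ F₈. -/
theorem aux_d {K : Type*} [Field K] (f : K → K)
    (h2 : ∀ z : K, z + z = 0) (h0 : f 0 = 0) (hinv : ∀ x, f (f x) = x)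
    (hstar : ∀ x y, f x + f (x + f y) = f (x + f (y + f x)))
    (a b : K) (ha : f a ≠ a) (hb : f b ≠ b)
    (hmem : ∀ x, f x ≠ x → x = a ∨ x = f a ∨ x = b ∨ x = f b) :
    f (a + f a) = a + f a := by
  by_contra hd
  have hz : ∀ p q : K, p + q = p → q = 0 := fun p q h =>
    add_left_cancel (a := p) (by rw [add_zero]; exact h)
  have hsw : ∀ p q r : K, p + q = r → q = p + r := fun p q r h => by
    rw [← h, ← add_assoc, h2, zero_add]
  have hA0 : a ≠ 0 := fun h => ha (by rw [h]; exact h0)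
  have hB0 : b ≠ 0 := fun h => hb (by rw [h]; exact h0)
  have hA'0 : f a ≠ 0 := fun h => hA0 (by rw [← hinv a, h, h0])
  have hB'0 : f b ≠ 0 := fun h => hB0 (by rw [← hinv b, h, h0])
  have hT := hstar a a
  rcases hmem _ hd with h | h | h | h
  · exact hA'0 (hz a (f a) h)
  · exact hA0 (hz (f a) a (by rw [add_comm]; exact h))
  · rw [h] at hT
    by_cases hs : f (a + f b) = a + f b
    · rw [hs] at hT; exact ha (add_right_cancel hT)
    · rcases hmem _ hs with h' | h' | h' | h'
      · exact hB'0 (hz a (f b) h')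
      · exact hb (by rw [hsw a (f b) (f a) h', h])
      · rw [h'] at hT
        refine hA'0 (add_right_cancel (b := f b) ?_)
        rw [zero_add]; exact hT
      · exact hA0 (hz (f b) a (by rw [add_comm]; exact h'))
  · rw [h, hinv b] at hT
    by_cases hs : f (a + b) = a + b
    · rw [hs] at hT; exact ha (add_right_cancel hT)
    · rcases hmem _ hs with h' | h' | h' | h'
      · exact hB0 (hz a b h')
      · refine hb ?_
        rw [← h]
        exact (hsw a b (f a) h').symm
      · exact hA0 (hz b a (by rw [add_comm]; exact h'))
      · rw [h', hinv b] at hT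
        refine hA'0 (add_right_cancel (b := b) ?_)
        rw [zero_add]; exact hT

theorem main_aux {K : Type*} [Field K] [Finite K]
    (h2 : ∀ z : K, z + z = 0) (hcard : Nat.card K = 8) (f : K → K)
    (hinj : Function.Injective f) (h0 : f 0 = 0)
    (hstar : ∀ x y : K, f x + f (x + f y) = f (x + f (y + f x)))
    (hfix : ({x : K | f x = x}).ncard = 4) :
    ∀ x y, f (x + y) = f x + f y := by
  have hsw : ∀ p q r : K, p + q = r → q = p + r := fun p q r h => by
    rw [← h, ← add_assoc, h2, zero_add]
  have hz : ∀ p q : K, p + q = p → q = 0 := fun p q h =>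
    add_left_cancel (a := p) (by rw [add_zero]; exact h)
  have hinv : ∀ x : K, f (f x) = x := by
    intro x
    have h := hstar x 0
    rw [h0, add_zero, zero_add, h2 (f x)] at h
    have h3 : f (x + f (f x)) = f 0 := by rw [h0, ← h]
    have h4 := hinj h3
    have h5 := hsw x (f (f x)) 0 h4
    rwa [add_zero] at h5
  have hNcard : ({x : K | f x ≠ x}).ncard = 4 := by
    have hcompl : ({x : K | f x = x}ᶜ : Set K) = {x : K | f x ≠ x} := rfl
    have h := Set.ncard_add_ncard_compl {x : K | f x = x}
    rw [hfix, hcard, hcompl] at h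
    omega
  obtain ⟨a, b, ha, hb, hba, hba', hmem⟩ :
      ∃ a b : K, f a ≠ a ∧ f b ≠ b ∧ b ≠ a ∧ b ≠ f a ∧
        (∀ x, f x ≠ x → x = a ∨ x = f a ∨ x = b ∨ x = f b) := by
    set N : Set K := {x : K | f x ≠ x} with hNdef
    obtain ⟨a, ha⟩ := Set.nonempty_of_ncard_ne_zero (s := N) (by rw [hNcard]; norm_num)
    have ha : f a ≠ a := ha
    have haa' : a ≠ f a := Ne.symm ha
    have ha' : f (f a) ≠ f a := by rw [hinv]; exact haa'
    have hpair : ({a, f a} : Set K) ⊆ N := by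
      rintro x (rfl | rfl)
      · exact ha
      · exact ha'
    have hdiff : (N \ {a, f a}).ncard = 2 := by
      rw [Set.ncard_diff hpair (Set.toFinite _), hNcard, Set.ncard_pair haa']
    obtain ⟨b, hbmem⟩ := Set.nonempty_of_ncard_ne_zero (s := N \ {a, f a}) (by rw [hdiff]; norm_num)
    obtain ⟨hbN, hbnot⟩ := hbmem
    have hb : f b ≠ b := hbN
    have hba : b ≠ a := fun h => hbnot (by rw [h]; left; rfl)
    have hba' : b ≠ f a := fun h => hbnot (by rw [h]; right; rfl)
    have hb'a : f b ≠ a := fun h => hba' (by rw [← hinv b, h])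
    have hb'a' : f b ≠ f a := fun h => hba (by rw [← hinv b, h, hinv])
    have hb'b : f b ≠ b := hb
    have hsub : ({a, f a, b, f b} : Set K) ⊆ N := by
      rintro x (rfl | rfl | rfl | rfl)
      · exact ha
      · exact ha'
      · exact hb
      · rw [hNdef]; simp only [Set.mem_setOf_eq, hinv]; exact Ne.symm hb
    have hcard4 : ({a, f a, b, f b} : Set K).ncard = 4 := by
      rw [Set.ncard_insert_of_notMem (by simp [haa', hba.symm, hb'a.symm]) (Set.toFinite _),
        Set.ncard_insert_of_notMem (by simp [hba'.symm, hb'a'.symm]) (Set.toFinite _),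
        Set.ncard_pair (Ne.symm hb'b)]
    have hNeq : ({a, f a, b, f b} : Set K) = N :=
      Set.eq_of_subset_of_ncard_le hsub (by rw [hNcard, hcard4]) (Set.toFinite _)
    exact ⟨a, b, ha, hb, hba, hba', fun x hx => by
      have : x ∈ ({a, f a, b, f b} : Set K) := hNeq ▸ hx
      simpa using this⟩
  have hda : f (a + f a) = a + f a := aux_d f h2 h0 hinv hstar a b ha hb hmem
  have hdb : f (b + f b) = b + f b := by
    refine aux_d f h2 h0 hinv hstar b a hb ha ?_
    intro x hx
    rcases hmem x hx with h | h | h | h <;> tauto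
  have hclosed : ∀ u v : K, f u = u → f v = v → f (u + v) = u + v := by
    have hL1 : ∀ u v : K, f u = u → f v = v → f (u + f (u + v)) = u + f (u + v) := by
      intro u v hu hv
      have h := hstar u v
      rw [hu, hv, add_comm v u] at h
      exact h.symm
    intro u v hu hv
    by_contra hw
    have hu0 : u ≠ 0 := fun h => hw (by rw [h, zero_add]; exact hv)
    have hv0 : v ≠ 0 := fun h => hw (by rw [h, add_zero]; exact hu)
    have huv : u ≠ v := fun h => hw (by rw [h, h2 v]; exact h0)
    -- the displacement d
    obtain ⟨d, hdfix, hdne, hfw⟩ : ∃ d : K, f d = d ∧ d ≠ 0 ∧ f (u + v) = (u + v) + d := by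
      rcases hmem (u + v) hw with h | h | h | h
      · exact ⟨a + f a, hda, fun h' => ha ((hsw a (f a) 0 h').trans (add_zero a)),
          by rw [h]; linear_combination -h2 a⟩
      · exact ⟨a + f a, hda, fun h' => ha ((hsw a (f a) 0 h').trans (add_zero a)),
          by rw [h, hinv]; linear_combination -h2 (f a)⟩
      · exact ⟨b + f b, hdb, fun h' => hb ((hsw b (f b) 0 h').trans (add_zero b)),
          by rw [h]; linear_combination -h2 b⟩
      · exact ⟨b + f b, hdb, fun h' => hb ((hsw b (f b) 0 h').trans (add_zero b)),
          by rw [h, hinv]; linear_combination -h2 (f b)⟩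
    have e1 : u + f (u + v) = v + d := by rw [hfw]; linear_combination h2 u
    have hvd : f (v + d) = v + d := by have h := hL1 u v hu hv; rw [e1] at h; exact h
    have e2 : v + f (v + u) = u + d := by rw [add_comm v u, hfw]; linear_combination h2 v
    have hud : f (u + d) = u + d := by have h := hL1 v u hv hu; rw [e2] at h; exact h
    -- extract the fourth fixed point q
    have h3sub : ({0, u, v} : Set K) ⊆ {x : K | f x = x} := by
      rintro x (rfl | rfl | rfl)
      · exact h0
      · exact hu
      · exact hv
    have h3card : ({0, u, v} : Set K).ncard = 3 := by
      rw [Set.ncard_insert_of_notMem (by simp [Ne.symm hu0, Ne.symm hv0]) (Set.toFinite _),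
        Set.ncard_pair huv]
    have hdiff : (({x : K | f x = x}) \ {0, u, v}).ncard = 1 := by
      rw [Set.ncard_diff h3sub (Set.toFinite _), hfix, h3card]
    obtain ⟨q, hqmem⟩ := Set.nonempty_of_ncard_ne_zero (by rw [hdiff]; norm_num)
    obtain ⟨hqF, hqnot⟩ := hqmem
    have hq : f q = q := hqF
    have hq0 : q ≠ 0 := fun h => hqnot (by rw [h]; left; rfl)
    have hqu : q ≠ u := fun h => hqnot (by rw [h]; right; left; rfl)
    have hqv : q ≠ v := fun h => hqnot (by rw [h]; right; right; rfl)
    have hsub4 : ({0, u, v, q} : Set K) ⊆ {x : K | f x = x} := by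
      rintro x (rfl | rfl | rfl | rfl)
      · exact h0
      · exact hu
      · exact hv
      · exact hq
    have hcard4 : ({0, u, v, q} : Set K).ncard = 4 := by
      rw [Set.ncard_insert_of_notMem (by simp [Ne.symm hu0, Ne.symm hv0, Ne.symm hq0]) (Set.toFinite _),
        Set.ncard_insert_of_notMem (by simp [huv, Ne.symm hqu]) (Set.toFinite _),
        Set.ncard_pair (Ne.symm hqv)]
    have hFeq : ({0, u, v, q} : Set K) = {x : K | f x = x} :=
      Set.eq_of_subset_of_ncard_le hsub4 (by rw [hfix, hcard4]) (Set.toFinite _)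
    have hFmem : ∀ z : K, f z = z → z = 0 ∨ z = u ∨ z = v ∨ z = q := by
      intro z hz
      have : z ∈ ({0, u, v, q} : Set K) := hFeq ▸ hz
      simpa using this
    rcases hFmem d hdfix with h | h | h | h
    · exact hdne h
    · rw [h] at hvd
      exact hw (by rw [add_comm u v]; exact hvd)
    · rw [h] at hud
      exact hw hud
    · rcases hFmem (u + d) hud with h' | h' | h' | h'
      · have hdu : d = u := (hsw u d 0 h').trans (add_zero u)
        exact hqu (by rw [← h, hdu])
      · exact hdne (hz u d h')
      · have hduv : d = u + v := hsw u d v h'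
        rw [hduv] at hdfix
        exact hw hdfix
      · rw [h] at h'
        exact hu0 (hz q u (by rw [add_comm]; exact h'))
  have ha0 : a ≠ 0 := fun h => ha (by rw [h]; exact h0)
  have hb0 : b ≠ 0 := fun h => hb (by rw [h]; exact h0)
  have ha'0 : f a ≠ 0 := fun h => ha0 (by rw [← hinv a, h, h0])
  have hb'0 : f b ≠ 0 := fun h => hb0 (by rw [← hinv b, h, h0])
  -- a + b is fixed
  have hab : f (a + b) = a + b := by
    by_contra hs
    rcases hmem _ hs with h | h | h | h
    · exact hb0 (hz a b h)
    · have : b = a + f a := hsw a b (f a) h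
      rw [this] at hb
      exact hb hda
    · exact ha0 (hz b a (by rw [add_comm]; exact h))
    · have : a = b + f b := hsw b a (f b) (by rw [add_comm]; exact h)
      rw [this] at ha
      exact ha hdb
  have hab' : f (a + f b) = a + f b := by
    have e : a + f b = (a + b) + (b + f b) := by linear_combination -h2 b
    rw [e]
    exact hclosed _ _ hab hdb
  have ha'b : f (f a + b) = f a + b := by
    have e : f a + b = (a + b) + (a + f a) := by linear_combination -h2 a
    rw [e]
    exact hclosed _ _ hab hda
  -- the two displacements agree
  have hd_eq : a + f a = b + f b := by
    have h := hstar a b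
    rw [hab'] at h
    rw [show b + f a = f a + b from add_comm _ _, ha'b] at h
    rw [show a + (f a + b) = b + (a + f a) from by ring] at h
    by_cases hwf : f (b + (a + f a)) = b + (a + f a)
    · rw [hwf] at h
      exact absurd (by linear_combination h) hb
    · rcases hmem _ hwf with h' | h' | h' | h'
      · rw [h'] at h
        have e1 : a + f b = 0 := add_left_cancel (a := f a) (by rw [add_zero]; exact h)
        have e2 : f b = a := (hsw a (f b) 0 e1).trans (add_zero a)
        exact absurd (by rw [← hinv b, e2]) hba'
      · rw [h', hinv] at h
        have e1 : a + f b = f a + a := hsw (f a) (a + f b) a h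
        have e2 : f b = f a := by linear_combination e1
        exact absurd (by rw [← hinv b, e2, hinv]) hba
      · exact absurd ((hsw a (f a) 0 (hz b (a + f a) h')).trans (add_zero a)) ha
      · exact hsw b (a + f a) (f b) h'
  -- explicit form of f off the fixed set
  have hform : ∀ x, f x ≠ x → f x = x + (a + f a) := by
    intro x hx
    rcases hmem x hx with h | h | h | h
    · rw [h]; linear_combination -h2 a
    · rw [h, hinv]; linear_combination -h2 (f a)
    · rw [h, hd_eq]; linear_combination -h2 b
    · rw [h, hinv, hd_eq]; linear_combination -h2 (f b)
  -- sums of two nonfixed points are fixed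
  have key : ∀ x y : K, (x = a ∨ x = f a ∨ x = b ∨ x = f b) →
      (y = a ∨ y = f a ∨ y = b ∨ y = f b) → f (x + y) = x + y := by
    have hffab : f (f a + f b) = f a + f b := by
      have e : f a + f b = a + b := by linear_combination hd_eq - h2 a + h2 (f b)
      rw [e]; exact hab
    rintro x y (h | h | h | h) (h' | h' | h' | h') <;> rw [h, h']
    · rw [h2 a]; exact h0
    · exact hda
    · exact hab
    · exact hab'
    · rw [add_comm]; exact hda
    · rw [h2 (f a)]; exact h0
    · exact ha'b
    · exact hffab
    · rw [add_comm]; exact hab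
    · rw [add_comm]; exact ha'b
    · rw [h2 b]; exact h0
    · exact hdb
    · rw [add_comm]; exact hab'
    · rw [add_comm]; exact hffab
    · rw [add_comm]; exact hdb
    · rw [h2 (f b)]; exact h0
  -- final case split
  intro x y
  by_cases hx : f x = x <;> by_cases hy : f y = y
  · rw [hclosed x y hx hy, hx, hy]
  · have hxy : f (x + y) ≠ x + y := by
      intro hc
      have h := hclosed x (x + y) hx hc
      rw [show x + (x + y) = y from by linear_combination h2 x] at h
      exact hy h
    rw [hform _ hxy, hform _ hy, hx]
    ring
  · have hxy : f (x + y) ≠ x + y := by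
      intro hc
      have h := hclosed y (x + y) hy hc
      rw [show y + (x + y) = x from by linear_combination h2 y] at h
      exact hx h
    rw [hform _ hxy, hform _ hx, hy]
    ring
  · rw [key x y (hmem x hx) (hmem y hy), hform x hx, hform y hy]
    linear_combination -h2 (a + f a)

/-- Over `F₈`, if `f ∈ Ω_0` is a product of exactly two disjoint transpositions
(i.e. a bijection with `f(0) = 0` satisfying (★) whose fixed-point set has exactly
4 elements), then `f` is additive. -/
theorem stmt11 (f : GaloisField 2 3 → GaloisField 2 3)
    (hbij : Function.Bijective f) (h0 : f 0 = 0) (hstar : StarEq f)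
    (hfix : ({x : GaloisField 2 3 | f x = x}).ncard = 4) :
    ∀ x y, f (x + y) = f x + f y := by
  have h2 : ∀ z : GaloisField 2 3, z + z = 0 := CharTwo.add_self_eq_zero
  have hcard : Nat.card (GaloisField 2 3) = 8 := by
    have h := GaloisField.card 2 3 (by norm_num)
    norm_num at h
    exact h
  exact main_aux h2 hcard f hbij.injective h0 hstar hfix
end

section
/- Let F₈ be the finite field with 8 elements and let f : F₈ → F₈ satisfy f(f(x)) = x for all x and f(x + y) = f(x) + f(y) for all x, y. Then the cellular automaton of any size N ≥ 1 built from f with helical boundary condition has period 2: for every initial state φ(0) ∈ F₈^N and every initial boundary value b(0) ∈ F₈, one has φ(2) = φ(0) and b(2) = b(0). -/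
/-- Auxiliary values `y_i` of one CA time step: `y_0 = b`, `y_{i+1} = x_i + f(x_i + y_i)`
(0-based indexing of the cells). -/
def auxSeq {F : Type*} [Field F] (f : F → F) (x : ℕ → F) (b : F) : ℕ → F
  | 0 => b
  | i + 1 => x i + f (x i + auxSeq f x b i)

/-- One time step of the cellular automaton of size `N` built from `f`, with boundary
constant `c` (`c = 0` is the helical boundary condition).  With `R(x,y) =
(y + f(x+y), x + f(x+y))`, `y_0 = b(t)` and `(x_i(t+1), y_i(t)) = R(x_i(t), y_{i-1}(t))`,
the new state is `φ(t+1) = (x_i(t+1))_i` and the new boundary value is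
`b(t+1) = y_N(t) + c`. -/
def step {F : Type*} [Field F] (f : F → F) (c : F) {N : ℕ}
    (s : (Fin N → F) × F) : (Fin N → F) × F :=
  let xe : ℕ → F := fun j => if h : j < N then s.1 ⟨j, h⟩ else 0
  let y : ℕ → F := auxSeq f xe s.2
  (fun j => y j + f (s.1 j + y j), y N + c)

private def xeF {F : Type*} [Field F] {N : ℕ} (φ : Fin N → F) : ℕ → F :=
  fun j => if h : j < N then φ ⟨j, h⟩ else 0

private lemma f_zero {F : Type*} [Field F] (f : F → F)
    (hadd : ∀ x y, f (x + y) = f x + f y) : f 0 = 0 := by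
  have h := hadd 0 0
  rw [add_zero] at h
  exact left_eq_add.mp h

private lemma period_two {F : Type*} [Field F] [CharP F 2] (f : F → F)
    (hinv : ∀ x, f (f x) = x) (hadd : ∀ x y, f (x + y) = f x + f y)
    (N : ℕ) (φ0 : Fin N → F) (b0 : F) :
    step f 0 (step f 0 (φ0, b0)) = (φ0, b0) := by
  have h2 : ∀ a : F, a + a = 0 := fun a => CharTwo.add_self_eq_zero a
  set y : ℕ → F := auxSeq f (xeF φ0) b0 with hy
  set φ1 : Fin N → F :=
    (fun j => y j + f (φ0 j + y j)) with hφ1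
  have hstep1 : step f 0 (φ0, b0) = (φ1, y N) := Prod.ext rfl (add_zero _)
  -- y recurrence
  have hyrec : ∀ i, y (i + 1) = xeF φ0 i + f (xeF φ0 i + y i) := fun i => rfl
  -- key invariant
  have hfix : ∀ i, f (y i + b0) = y i + b0 := by
    intro i
    induction i with
    | zero =>
      show f (b0 + b0) = b0 + b0
      rw [h2, f_zero f hadd]
    | succ i ih =>
      have key : y (i + 1) + b0 =
          ((xeF φ0 i + y i) + f (xeF φ0 i + y i)) + (y i + b0) := by
        rw [hyrec]; linear_combination -h2 (y i)
      rw [key, hadd ((xeF φ0 i + y i) + f (xeF φ0 i + y i)) (y i + b0),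
        hadd (xeF φ0 i + y i) (f (xeF φ0 i + y i)), hinv, ih]
      ring
  have hc : f (b0 + y N) = b0 + y N := by
    rw [add_comm b0 (y N)]; exact hfix N
  set c : F := b0 + y N with hcdef
  set y1 : ℕ → F := auxSeq f (xeF φ1) (y N) with hy1def
  have hy1 : ∀ i, i ≤ N → y1 i = y i + c := by
    intro i
    induction i with
    | zero =>
      intro _
      show y N = b0 + c
      rw [hcdef]
      linear_combination -h2 b0
    | succ i ih =>
      intro hle
      have hiN : i < N := hle
      have ihi := ih (Nat.le_of_succ_le hle)
      have hxe1 : xeF φ1 i = y i + f (xeF φ0 i + y i) := by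
        show (if h : i < N then φ1 ⟨i, h⟩ else 0) = _
        rw [dif_pos hiN]
        show y i + f (φ0 ⟨i, hiN⟩ + y i) = y i + f (xeF φ0 i + y i)
        have hv : φ0 ⟨i, hiN⟩ = xeF φ0 i := by
          show _ = if h : i < N then φ0 ⟨i, h⟩ else 0
          rw [dif_pos hiN]
        rw [hv]
      have step1 : y1 (i + 1) = xeF φ1 i + f (xeF φ1 i + y1 i) := rfl
      have harg : (y i + f (xeF φ0 i + y i)) + (y i + c) =
          f (xeF φ0 i + y i) + c := by linear_combination h2 (y i)
      have h3 : f (f (xeF φ0 i + y i) + c) = (xeF φ0 i + y i) + c := by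
        rw [hadd (f (xeF φ0 i + y i)) c, hinv, hc]
      rw [step1, hxe1, ihi, harg, h3, hyrec i]
      linear_combination h2 (y i)
  -- finish
  rw [hstep1]
  have hfirst : (step f 0 (φ1, y N)).1 = φ0 := by
    funext j
    show y1 ↑j + f (φ1 j + y1 ↑j) = φ0 j
    have hj := hy1 j (Nat.le_of_lt j.isLt)
    rw [hj]
    have harg : φ1 j + (y ↑j + c) = f (φ0 j + y ↑j) + c := by
      rw [hφ1]; linear_combination h2 (y ↑j)
    have h3 : f (f (φ0 j + y ↑j) + c) = (φ0 j + y ↑j) + c := by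
      rw [hadd (f (φ0 j + y ↑j)) c, hinv, hc]
    rw [harg, h3]
    linear_combination h2 (y ↑j) + h2 c
  have hsecond : (step f 0 (φ1, y N)).2 = b0 := by
    show y1 N + 0 = b0
    rw [add_zero, hy1 N le_rfl, hcdef]
    linear_combination h2 (y N)
  exact Prod.ext hfirst hsecond

/-- Over `F₈`, if `f` is an additive involution, the CA of any size `N ≥ 1` with helical
boundary condition has period 2: `φ(2) = φ(0)` and `b(2) = b(0)`. -/
theorem stmt12 (f : GaloisField 2 3 → GaloisField 2 3)
    (hinv : ∀ x, f (f x) = x) (hadd : ∀ x y, f (x + y) = f x + f y)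
    (N : ℕ) (hN : 1 ≤ N) (φ0 : Fin N → GaloisField 2 3) (b0 : GaloisField 2 3) :
    (step f 0)^[2] (φ0, b0) = (φ0, b0) := by
  haveI : Fact (Nat.Prime 2) := ⟨by norm_num⟩
  show step f 0 (step f 0 (φ0, b0)) = (φ0, b0)
  exact period_two f hinv hadd N φ0 b0
end

section
/- Let F₈ be the finite field with 8 elements and let f : F₈ → F₈ be a bijection with f(0) = 0 satisfying (★) that is a product of exactly two disjoint transpositions (its fixed-point set has exactly 4 elements). Then the cellular automaton of any size N ≥ 1 built from f with helical boundary condition has period 2: for every initial state φ(0) ∈ F₈^N and every initial boundary value b(0) ∈ F₈, one has φ(2) = φ(0). -/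
section PartB

variable {F : Type*} [Field F] (htwo : ∀ z : F, z + z = 0) (f : F → F) (a : F)
include htwo

/-- displacement lemma -/
theorem aux_disp (H1 : ∀ x, f x = x ∨ f x = x + a) (s : F) :
    f s + s = 0 ∨ f s + s = a := by
  rcases H1 s with h | h
  · left; rw [h, htwo]
  · right; rw [h]; linear_combination htwo s

theorem aux_closure {u v : F} (hu : u = 0 ∨ u = a) (hv : v = 0 ∨ v = a) :
    u + v = 0 ∨ u + v = a := by
  rcases hu with h | h <;> rcases hv with h' | h' <;> rw [h, h'] <;> simp [htwo a]

omit htwo in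
theorem aux_shift (H2 : ∀ x, f (x + a) = f x + a) {e : F} (he : e = 0 ∨ e = a) (u : F) :
    f (u + e) = f u + e := by
  rcases he with rfl | rfl
  · simp
  · exact H2 u

theorem aux_ydiff (H1 : ∀ x, f x = x ∨ f x = x + a) (x : ℕ → F) (b : F) :
    ∀ i, auxSeq f x b i + b = 0 ∨ auxSeq f x b i + b = a := by
  intro i
  induction i with
  | zero => left; exact htwo b
  | succ i ih =>
      have hd := aux_disp htwo f a H1 (x i + auxSeq f x b i)
      have : auxSeq f x b (i + 1) + b =
          (f (x i + auxSeq f x b i) + (x i + auxSeq f x b i)) + (auxSeq f x b i + b) := by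
        show x i + f (x i + auxSeq f x b i) + b = _
        linear_combination - htwo (auxSeq f x b i)
      rw [this]
      exact aux_closure htwo a hd ih

theorem periodTwo (H1 : ∀ x, f x = x ∨ f x = x + a) (H2 : ∀ x, f (x + a) = f x + a)
    {N : ℕ} (φ0 : Fin N → F) (b0 : F) :
    ((step f 0)^[2] (φ0, b0)).1 = φ0 := by
  -- names
  set xe : ℕ → F := fun j => if h : j < N then φ0 ⟨j, h⟩ else 0 with hxe
  set y : ℕ → F := auxSeq f xe b0 with hy
  set φ1 : Fin N → F := fun j => y j + f (φ0 j + y j) with hφ1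
  set b1 : F := y N + 0 with hb1
  have hstep1 : step f 0 (φ0, b0) = (φ1, b1) := rfl
  set xe1 : ℕ → F := fun j => if h : j < N then φ1 ⟨j, h⟩ else 0 with hxe1
  set y' : ℕ → F := auxSeq f xe1 b1 with hy'
  have hstep2 : ((step f 0)^[2] (φ0, b0)).1 = fun j : Fin N => y' ↑j + f (φ1 j + y' ↑j) := by
    rw [show (2:ℕ) = 1 + 1 from rfl, Function.iterate_add_apply, Function.iterate_one,
      hstep1]
    rfl
  set e : F := y N + b0 with he
  have heP : e = 0 ∨ e = a := aux_ydiff htwo f a H1 xe b0 N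
  -- main invariant
  have key : ∀ i, i ≤ N → y' i = y i + e := by
    intro i
    induction i with
    | zero =>
        intro _
        show b1 = y 0 + e
        have h00 : y 0 = b0 := rfl
        rw [hb1, h00, he]
        linear_combination - htwo b0
    | succ i ih =>
        intro hiN
        have hi : i < N := hiN
        have hile : i ≤ N := Nat.le_of_lt hi
        have hx1 : xe1 i = y i + f (xe i + y i) := by
          rw [hxe1]
          simp only [dif_pos hi]
          rw [hφ1]
          have : φ0 ⟨i, hi⟩ = xe i := by rw [hxe]; simp [dif_pos hi]
          simp [this]
        set s : F := xe i + y i with hs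
        have hd : f s + s = 0 ∨ f s + s = a := aux_disp htwo f a H1 s
        have hde : (f s + s) + e = 0 ∨ (f s + s) + e = a := aux_closure htwo a hd heP
        have hfse : f (f s + e) = f s + ((f s + s) + e) := by
          have h1 : f s + e = s + ((f s + s) + e) := by linear_combination - htwo s
          rw [h1, aux_shift f a H2 hde s]
        have hstep : y' (i + 1) = xe1 i + f (xe1 i + y' i) := rfl
        rw [hstep, hx1, ih hile]
        have harg : (y i + f (xe i + y i)) + (y i + e) = f s + e := by
          rw [← hs]; linear_combination htwo (y i)
        rw [harg, hfse]
        have hy1 : y (i + 1) = xe i + f (xe i + y i) := rfl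
        rw [hy1, ← hs]
        linear_combination htwo (y i) + htwo (f s) + hs
  rw [hstep2]
  funext j
  have hjN : (j : ℕ) ≤ N := Nat.le_of_lt j.isLt
  have hyj := key j hjN
  have hφ0j : φ0 j = xe j := by rw [hxe]; simp [dif_pos j.isLt]
  have hφ1j : φ1 j = y j + f (φ0 j + y j) := rfl
  set s : F := φ0 j + y j with hs
  have hd : f s + s = 0 ∨ f s + s = a := aux_disp htwo f a H1 s
  have hde : (f s + s) + e = 0 ∨ (f s + s) + e = a := aux_closure htwo a hd heP
  have hfse : f (f s + e) = f s + ((f s + s) + e) := by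
    have h1 : f s + e = s + ((f s + s) + e) := by linear_combination - htwo s
    rw [h1, aux_shift f a H2 hde s]
  rw [hφ1j, hyj]
  have harg : (y j + f s) + (y j + e) = f s + e := by linear_combination htwo (y j)
  rw [harg, hfse]
  linear_combination htwo (y (j:ℕ)) + htwo (f s) + htwo e + hs

end PartB

section PartA

variable {F : Type*} [Field F] [Finite F]

theorem partA (htwo : ∀ z : F, z + z = 0) (hcard : Nat.card F = 8)
    (f : F → F) (hbij : Function.Bijective f) (h0 : f 0 = 0) (hstar : StarEq f)
    (hfix : ({x : F | f x = x}).ncard = 4) :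
    ∃ a : F, (∀ x, f x = x ∨ f x = x + a) ∧ (∀ x, f (x + a) = f x + a) := by
  have hinj := hbij.injective
  have hcancel : ∀ u v : F, u + v = 0 → u = v := by
    intro u v h
    linear_combination h - htwo v
  -- f is an involution
  have hinv : ∀ x, f (f x) = x := by
    intro x
    have h := hstar x 0
    rw [h0, add_zero, zero_add, htwo (f x)] at h
    have h2 : f (x + f (f x)) = f 0 := by rw [h0, ← h]
    have h3 := hinj h2
    have h4 : f (f x) + x = 0 := by linear_combination h3
    exact hcancel _ _ h4
  set K : Set F := {x | f x = x} with hKdef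
  have hKfin : K.Finite := Set.toFinite K
  have h0K : (0 : F) ∈ K := h0
  have hmemK : ∀ z : F, z ∈ K ↔ f z = z := fun z => Iff.rfl
  -- fixed points: translate-invariance from (★)
  have hKtrans : ∀ x y, x ∈ K → y ∈ K → (x + f (x + y)) ∈ K := by
    intro x y hx hy
    have h := hstar x y
    rw [show f x = x from hx, show f y = y from hy, add_comm y x] at h
    exact h.symm
  have hfM : ∀ m, m ∉ K → f m ∉ K := by
    intro m hm hfm
    have h2 : f (f m) = f m := hfm
    rw [hinv] at h2
    exact hm ((hmemK m).mpr h2.symm)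
  -- K is closed under addition
  have hadd : ∀ x y, x ∈ K → y ∈ K → x + y ∈ K := by
    intro x y hx hy
    by_cases hxy : x + y ∈ K
    · exact hxy
    exfalso
    have hx0 : x ≠ 0 := by rintro rfl; rw [zero_add] at hxy; exact hxy hy
    have hy0 : y ≠ 0 := by rintro rfl; rw [add_zero] at hxy; exact hxy hx
    have hxyne : x ≠ y := by
      rintro rfl
      rw [htwo x] at hxy; exact hxy h0K
    set m : F := f (x + y) with hm
    have hmne : m ≠ x + y := by
      intro h
      exact hxy (by rw [hmemK, ← hm, h])
    have hmK : m ∉ K := hfM _ hxy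
    have hm0 : m ≠ 0 := fun h => hmK (h ▸ h0K)
    have h1 : x + m ∈ K := hKtrans x y hx hy
    have h2 : y + m ∈ K := by
      have h := hKtrans y x hy hx
      rwa [add_comm y x] at h
    -- the three-element set {0, x, y}
    set T : Set F := {0, x, y} with hT
    have hTsub : T ⊆ K := by
      intro z hz
      rcases hz with rfl | rfl | rfl
      exacts [h0K, hx, hy]
    have hTcard : T.ncard = 3 := by
      rw [hT, Set.ncard_insert_of_notMem (by simp [hx0.symm, hy0.symm]) (Set.toFinite _),
        Set.ncard_pair hxyne]
    have hdiff : (K \ T).ncard = 1 := by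
      rw [Set.ncard_diff hTsub (Set.toFinite _), hTcard, hfix]
    obtain ⟨z, hz⟩ := Set.ncard_eq_one.mp hdiff
    have hxmT : x + m ∈ K \ T := by
      refine ⟨h1, ?_⟩
      intro hmem
      simp only [hT, Set.mem_insert_iff, Set.mem_singleton_iff] at hmem
      rcases hmem with h | h | h
      · exact hmK (by rw [show m = x from by linear_combination h - htwo x] at hmK ⊢; exact hx)
      · exact hm0 (by linear_combination h)
      · exact hmne (by linear_combination h - htwo x)
    have hymT : y + m ∈ K \ T := by
      refine ⟨h2, ?_⟩
      intro hmem
      simp only [hT, Set.mem_insert_iff, Set.mem_singleton_iff] at hmem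
      rcases hmem with h | h | h
      · exact hmK (by rw [show m = y from by linear_combination h - htwo y] at hmK ⊢; exact hy)
      · exact hmne (by linear_combination h - htwo y)
      · exact hm0 (by linear_combination h)
    rw [hz, Set.mem_singleton_iff] at hxmT hymT
    exact hxyne (by linear_combination hxmT - hymT)
  -- the complement is a single coset: sums of two non-fixed points are fixed
  have hcompl : Kᶜ.ncard = 4 := by
    have h := Set.ncard_add_ncard_compl K (Set.toFinite _) (Set.toFinite _)
    rw [hfix, hcard] at h
    omega
  have hcoset : ∀ m m', m ∉ K → m' ∉ K → m + m' ∈ K := by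
    intro m m' hm hm'
    have himg : (fun k => m + k) '' K ⊆ Kᶜ := by
      rintro _ ⟨k, hk, rfl⟩ hmem
      have : m + k + k ∈ K := hadd _ _ hmem hk
      have hmk : m + k + k = m := by linear_combination htwo k
      rw [hmk] at this
      exact hm this
    have hicard : ((fun k => m + k) '' K).ncard = 4 := by
      rw [Set.ncard_image_of_injective K (add_right_injective m), hfix]
    have heq : (fun k => m + k) '' K = Kᶜ :=
      Set.eq_of_subset_of_ncard_le himg (by rw [hicard, hcompl]) (Set.toFinite _)
    have hm'mem : m' ∈ (fun k => m + k) '' K := by rw [heq]; exact hm'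
    obtain ⟨k, hk, hkeq⟩ := hm'mem
    have : m + m' = k := by linear_combination - hkeq + htwo m
    rwa [this]
  -- pick a moved point
  have hMne : (Kᶜ : Set F).Nonempty := Set.nonempty_of_ncard_ne_zero (by rw [hcompl]; norm_num)
  obtain ⟨p, hp⟩ := hMne
  have hpK : p ∉ K := hp
  set a : F := p + f p with ha
  have hfpM : f p ∉ K := hfM p hpK
  have hfpne : f p ≠ p := fun h => hpK ((hmemK p).mpr h)
  have ha0 : a ≠ 0 := by
    intro h
    exact hfpne (hcancel p (f p) (by linear_combination h - ha)).symm
  have haK : a ∈ K := by rw [ha]; exact hcoset p (f p) hpK hfpM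
  have H1 : ∀ x, f x = x ∨ f x = x + a := by
    intro x
    by_cases hx : x ∈ K
    · left; exact hx
    right
    by_cases hxp : x = p
    · rw [hxp]; linear_combination - ha - htwo p
    by_cases hxfp : x = f p
    · rw [hxfp, hinv]; linear_combination - ha - htwo (f p)
    have hfxM : f x ∉ K := hfM x hx
    set γ : F := p + x with hγ
    set γ' : F := p + f x with hγ'
    have hγK : γ ∈ K := by rw [hγ]; exact hcoset p x hpK hx
    have hγ'K : γ' ∈ K := by rw [hγ']; exact hcoset p (f x) hpK hfxM
    have hγ0 : γ ≠ 0 := fun h => hxp (hcancel p x (by linear_combination h - hγ)).symm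
    have hγa : γ ≠ a := fun h => hxfp (by linear_combination h - hγ + ha)
    have hγ'0 : γ' ≠ 0 := by
      intro h
      have h2 : f x = p := (hcancel p (f x) (by linear_combination h - hγ')).symm
      exact hxfp (by rw [← hinv x, h2])
    have hγ'a : γ' ≠ a := by
      intro h
      have h2 : f x = f p := by linear_combination h - hγ' + ha
      exact hxp (hinj h2)
    have hγ'γ : γ' ≠ γ := by
      intro h
      have h2 : f x = x := by linear_combination h - hγ' + hγ
      exact hx ((hmemK x).mpr h2)
    -- K is exactly {0, a, γ, γ + a}
    have hγaK : γ + a ∈ K := hadd _ _ hγK haK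
    set S : Set F := {0, a, γ, γ + a} with hS
    have hSsub : S ⊆ K := by
      intro z hz
      rcases hz with rfl | rfl | rfl | rfl
      exacts [h0K, haK, hγK, hγaK]
    have hne1 : γ ≠ γ + a := fun h => ha0 (by linear_combination - h)
    have hne2 : a ≠ γ := fun h => hγa h.symm
    have hne3 : a ≠ γ + a := fun h => hγ0 (by linear_combination - h)
    have hne4 : (0:F) ≠ a := fun h => ha0 h.symm
    have hne5 : (0:F) ≠ γ := fun h => hγ0 h.symm
    have hne6 : (0:F) ≠ γ + a := by
      intro h
      exact hγa (hcancel γ a (by linear_combination - h))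
    have hScard : S.ncard = 4 := by
      rw [hS]
      rw [Set.ncard_insert_of_notMem (by simp [hne4, hne5, hne6]) (Set.toFinite _),
        Set.ncard_insert_of_notMem (by simp [hne2, hne3]) (Set.toFinite _),
        Set.ncard_pair hne1]
    have hSK : S = K :=
      Set.eq_of_subset_of_ncard_le hSsub (by rw [hScard, hfix]) (Set.toFinite _)
    have hγ'S : γ' ∈ S := hSK ▸ hγ'K
    simp only [hS, Set.mem_insert_iff, Set.mem_singleton_iff] at hγ'S
    rcases hγ'S with h | h | h | h
    · exact absurd h hγ'0
    · exact absurd h hγ'a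
    · exact absurd h hγ'γ
    · linear_combination h
  refine ⟨a, H1, ?_⟩
  intro x
  rcases H1 x with h1 | h1 <;> rcases H1 (x + a) with h2 | h2
  · rw [h2, h1]
  · exfalso
    have h3 : f (x + a) = f x := by rw [h2, h1]; linear_combination htwo a
    exact ha0 (by linear_combination hinj h3)
  · exfalso
    have h3 : f (x + a) = f x := by rw [h2, h1]
    exact ha0 (by linear_combination hinj h3)
  · rw [h2, h1]

end PartA

/-- Over `F₈`, if `f` is a bijection with `f(0) = 0` satisfying (★) that is a product of
exactly two disjoint transpositions (fixed-point set of size 4), then the CA of any size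
`N ≥ 1` with helical boundary condition has period 2: `φ(2) = φ(0)`. -/
theorem stmt13 (f : GaloisField 2 3 → GaloisField 2 3)
    (hbij : Function.Bijective f) (h0 : f 0 = 0) (hstar : StarEq f)
    (hfix : ({x : GaloisField 2 3 | f x = x}).ncard = 4)
    (N : ℕ) (hN : 1 ≤ N) (φ0 : Fin N → GaloisField 2 3) (b0 : GaloisField 2 3) :
    ((step f 0)^[2] (φ0, b0)).1 = φ0 := by
  have htwo : ∀ z : GaloisField 2 3, z + z = 0 := fun z => CharTwo.add_self_eq_zero z
  have hcard : Nat.card (GaloisField 2 3) = 8 := by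
    rw [GaloisField.card 2 3 (by norm_num)]; norm_num
  obtain ⟨a, H1, H2⟩ := partA htwo hcard f hbij h0 hstar hfix
  exact periodTwo htwo f a H1 H2 φ0 b0
end

section
/- Let F₈ be the finite field with 8 elements, let a, b be two distinct nonzero elements of F₈, and let f : F₈ → F₈ be the single transposition [a b] (f(a) = b, f(b) = a, f(x) = x otherwise). Then the cellular automaton of any size N ≥ 1 built from f with helical boundary condition has period 2: for every initial state φ(0) ∈ F₈^N and every initial boundary value b(0) ∈ F₈, one has φ(2) = φ(0). -/
/-- Over `F₈`, if `f` is the single transposition `[a b]` of two distinct nonzero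
elements, then the CA of any size `N ≥ 1` with helical boundary condition has period 2:
`φ(2) = φ(0)`. -/
theorem stmt14 (a b : GaloisField 2 3) (ha : a ≠ 0) (hb : b ≠ 0) (hab : a ≠ b)
    (f : GaloisField 2 3 → GaloisField 2 3)
    (hfa : f a = b) (hfb : f b = a) (hother : ∀ x, x ≠ a → x ≠ b → f x = x)
    (N : ℕ) (hN : 1 ≤ N) (φ0 : Fin N → GaloisField 2 3) (b0 : GaloisField 2 3) :
    ((step f 0)^[2] (φ0, b0)).1 = φ0 := by
  have h2 : ∀ t : GaloisField 2 3, t + t = 0 := fun t => CharTwo.add_self_eq_zero t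
  set d := a + b with hd
  have hda : a + d = b := by linear_combination h2 a
  have hdb : b + d = a := by linear_combination h2 b
  -- f commutes with adding d
  have hL1 : ∀ s, f (s + d) = f s + d := by
    intro s
    rcases eq_or_ne s a with rfl | hsa
    · rw [hda, hfb, hfa]; linear_combination -h2 b
    rcases eq_or_ne s b with rfl | hsb
    · rw [hdb, hfa, hfb]; linear_combination -h2 a
    · have h1 : s + d ≠ a := fun h => hsb (by linear_combination h - hdb)
      have h3 : s + d ≠ b := fun h => hsa (by linear_combination h - hda)
      rw [hother _ h1 h3, hother _ hsa hsb]
  have hL1' : ∀ s δ, (δ = 0 ∨ δ = d) → f (s + δ) = f s + δ := by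
    rintro s δ (rfl | rfl)
    · rw [add_zero, add_zero]
    · exact hL1 s
  have hL2 : ∀ s, s + f s = 0 ∨ s + f s = d := by
    intro s
    rcases eq_or_ne s a with rfl | hsa
    · rw [hfa]; right; rfl
    rcases eq_or_ne s b with rfl | hsb
    · rw [hfb]; right; linear_combination (0 : GaloisField 2 3)
    · rw [hother _ hsa hsb]; left; exact h2 s
  set x : ℕ → GaloisField 2 3 := fun j => if h : j < N then φ0 ⟨j, h⟩ else 0 with hxdef
  set y : ℕ → GaloisField 2 3 := auxSeq f x b0 with hydef
  set x' : ℕ → GaloisField 2 3 :=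
    fun j => if h : j < N then y j + f (φ0 ⟨j, h⟩ + y j) else 0 with hx'def
  set y' : ℕ → GaloisField 2 3 := auxSeq f x' (y N + 0) with hy'def
  -- one step of y moves by an element of {0, d}
  have hy1 : ∀ i, ∃ δ, (δ = 0 ∨ δ = d) ∧ y (i + 1) = y i + δ := by
    intro i
    refine ⟨x i + y i + f (x i + y i), hL2 (x i + y i), ?_⟩
    have hY : y (i + 1) = x i + f (x i + y i) := by rw [hydef]; rfl
    rw [hY]; linear_combination -h2 (y i)
  have hy0 : ∀ i, ∃ δ, (δ = 0 ∨ δ = d) ∧ y i = y 0 + δ := by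
    intro i
    induction i with
    | zero => exact ⟨0, Or.inl rfl, (add_zero _).symm⟩
    | succ i ih =>
        obtain ⟨δ, hδ, hi⟩ := ih
        obtain ⟨ε, hε, hi'⟩ := hy1 i
        refine ⟨δ + ε, ?_, by rw [hi', hi]; ring⟩
        rcases hδ with rfl | rfl <;> rcases hε with rfl | rfl <;> simp [h2 d]
  -- the key invariant: y' i differs from y i by an element of {0, d}
  have key : ∀ i, i ≤ N → ∃ δ, (δ = 0 ∨ δ = d) ∧ y' i = y i + δ := by
    intro i
    induction i with
    | zero =>
        intro _
        obtain ⟨δ, hδ, hi⟩ := hy0 N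
        refine ⟨δ, hδ, ?_⟩
        have : y' 0 = y N + 0 := by rw [hy'def]; rfl
        rw [this, hi]; ring
    | succ i ih =>
        intro hiN1
        have hiN : i < N := hiN1
        obtain ⟨δ, hδ, hyi⟩ := ih (le_of_lt hiN)
        set s := x i + y i with hs
        have hε : s + f s = 0 ∨ s + f s = d := hL2 s
        set ε := s + f s with hεdef
        have hfs : f s = s + ε := by rw [hεdef]; linear_combination -h2 s
        have hxφ : x i = φ0 ⟨i, hiN⟩ := by rw [hxdef]; simp [hiN]
        have hx'i : x' i = x i + ε := by
          rw [hx'def]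
          simp only [dif_pos hiN]
          rw [← hxφ]
          linear_combination hfs + h2 (y i)
        have hεδ : ε + δ = 0 ∨ ε + δ = d := by
          rcases hε with h | h <;> rcases hδ with rfl | rfl <;> rw [h] <;> simp [h2 d]
        have hsum : x' i + y' i = s + (ε + δ) := by
          rw [hx'i, hyi, hs]; ring
        have hf2 : f (x' i + y' i) = f s + (ε + δ) := by rw [hsum]; exact hL1' s _ hεδ
        refine ⟨δ, hδ, ?_⟩
        have hY' : y' (i + 1) = x' i + f (x' i + y' i) := by rw [hy'def]; rfl
        have hY : y (i + 1) = x i + f s := by rw [hydef, hs]; rfl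
        rw [hY', hY, hf2, hx'i]; linear_combination h2 ε
  have hres : ((step f 0)^[2] (φ0, b0)).1
      = fun j : Fin N => y' j + f ((y j + f (φ0 j + y j)) + y' j) := rfl
  rw [hres]
  funext j
  have hiN : (j : ℕ) < N := j.isLt
  obtain ⟨δ, hδ, hyi⟩ := key j (le_of_lt hiN)
  set s := x (j : ℕ) + y (j : ℕ) with hs
  have hε : s + f s = 0 ∨ s + f s = d := hL2 s
  set ε := s + f s with hεdef
  have hfs : f s = s + ε := by rw [hεdef]; linear_combination -h2 s
  have hxφ : x (j : ℕ) = φ0 j := by rw [hxdef]; simp [hiN]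
  have hεδ : ε + δ = 0 ∨ ε + δ = d := by
    rcases hε with h | h <;> rcases hδ with rfl | rfl <;> rw [h] <;> simp [h2 d]
  have hsum : (y (j : ℕ) + f (φ0 j + y (j : ℕ))) + y' (j : ℕ) = s + (ε + δ) := by
    rw [← hxφ, ← hs, hyi, hfs]; linear_combination h2 (y (j : ℕ))
  rw [hsum, hL1' s _ hεδ, hyi, hfs, ← hxφ]
  linear_combination hs + h2 (y (j : ℕ)) + h2 δ + h2 ε
end

section
/- Let F₈ be the finite field with 8 elements, let a, b be two distinct nonzero elements of F₈, let f : F₈ → F₈ be the single transposition [a b] (f(a) = b, f(b) = a, f(x) = x otherwise), and let c ∈ F₈. Consider the cellular automaton of any size N ≥ 1 built from f with the modified boundary condition b(t+1) = y_N(t) + c. Then for every initial state φ(0) ∈ F₈^N and every initial boundary value b(0) ∈ F₈, one has φ(4) = φ(0). -/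
namespace CA15

variable {F : Type*} [Field F]

/-- The extension of the state to `ℕ` used inside `step`. -/
def xe {N : ℕ} (s : (Fin N → F) × F) : ℕ → F :=
  fun j => if h : j < N then s.1 ⟨j, h⟩ else 0

lemma step_fst (f : F → F) (c : F) {N : ℕ} (s : (Fin N → F) × F) (j : Fin N) :
    (step f c s).1 j
      = auxSeq f (xe s) s.2 j + f (s.1 j + auxSeq f (xe s) s.2 j) := rfl

lemma step_snd (f : F → F) (c : F) {N : ℕ} (s : (Fin N → F) × F) :
    (step f c s).2 = auxSeq f (xe s) s.2 N + c := rfl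

lemma Dadd (d : F) (h2 : ∀ z : F, z + z = 0) {u v : F}
    (hu : u = 0 ∨ u = d) (hv : v = 0 ∨ v = d) :
    u + v = 0 ∨ u + v = d := by
  rcases hu with hu | hu
  · rcases hv with hv | hv
    · rw [hu, hv]; left; ring
    · rw [hu, hv]; right; ring
  · rcases hv with hv | hv
    · rw [hu, hv]; right; ring
    · rw [hu, hv]; left; exact h2 d

lemma gEq (f : F → F) (d : F) (h2 : ∀ z : F, z + z = 0)
    (hfd : ∀ s : F, f (s + d) = f s + d) {u v : F}
    (h : u + v = 0 ∨ u + v = d) : f u + u = f v + v := by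
  rcases h with h | h
  · have huv : u = v := by linear_combination h - h2 v
    rw [huv]
  · have huv : u = v + d := by linear_combination h - h2 v
    rw [huv, hfd]
    linear_combination h2 d

lemma auxD (f : F → F) (d : F) (h2 : ∀ z : F, z + z = 0)
    (hg : ∀ s : F, f s + s = 0 ∨ f s + s = d) (x : ℕ → F) (b : F) :
    ∀ i, auxSeq f x b i + b = 0 ∨ auxSeq f x b i + b = d := by
  intro i
  induction i with
  | zero => exact Or.inl (h2 b)
  | succ i ih =>
      have key : auxSeq f x b (i + 1) + b
          = (f (x i + auxSeq f x b i) + (x i + auxSeq f x b i))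
            + (auxSeq f x b i + b) := by
        simp only [auxSeq]
        linear_combination - h2 (auxSeq f x b i)
      rw [key]
      exact Dadd d h2 (hg _) ih

lemma auxEq (f : F → F) (d : F) (h2 : ∀ z : F, z + z = 0)
    (hfd : ∀ s : F, f (s + d) = f s + d) (x x' : ℕ → F) (b b' : F)
    (hb : b' + b = 0 ∨ b' + b = d)
    (hx : ∀ j, x' j + x j = 0 ∨ x' j + x j = d) :
    ∀ i, auxSeq f x' b' i + auxSeq f x b i = b' + b := by
  intro i
  induction i with
  | zero => rfl
  | succ i ih =>
      have hs : (x' i + auxSeq f x' b' i) + (x i + auxSeq f x b i) = 0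
          ∨ (x' i + auxSeq f x' b' i) + (x i + auxSeq f x b i) = d := by
        have hrw : (x' i + auxSeq f x' b' i) + (x i + auxSeq f x b i)
            = (x' i + x i) + (b' + b) := by linear_combination ih
        rw [hrw]
        exact Dadd d h2 (hx i) hb
      have hfE := gEq f d h2 hfd hs
      simp only [auxSeq]
      linear_combination hfE + ih + h2 (x i)
        + h2 (f (x i + auxSeq f x b i)) - h2 (auxSeq f x' b' i)

lemma xeD (d : F) {N : ℕ} (s s' : (Fin N → F) × F)
    (hx : ∀ j : Fin N, s'.1 j + s.1 j = 0 ∨ s'.1 j + s.1 j = d) :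
    ∀ j : ℕ, xe s' j + xe s j = 0 ∨ xe s' j + xe s j = d := by
  intro j
  unfold xe
  by_cases h : j < N
  · simp only [dif_pos h]; exact hx ⟨j, h⟩
  · simp only [dif_neg h]; exact Or.inl (by ring)

lemma yEq (f : F → F) (d : F) (h2 : ∀ z : F, z + z = 0)
    (hfd : ∀ s : F, f (s + d) = f s + d) {N : ℕ} (s s' : (Fin N → F) × F)
    (hb : s'.2 + s.2 = 0 ∨ s'.2 + s.2 = d)
    (hx : ∀ j : Fin N, s'.1 j + s.1 j = 0 ∨ s'.1 j + s.1 j = d)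
    (i : ℕ) :
    auxSeq f (xe s') s'.2 i + auxSeq f (xe s) s.2 i = s'.2 + s.2 :=
  auxEq f d h2 hfd (xe s) (xe s') s.2 s'.2 hb (xeD d s s' hx) i

lemma stepIncrEq (f : F → F) (d : F) (h2 : ∀ z : F, z + z = 0)
    (hfd : ∀ s : F, f (s + d) = f s + d) (c : F) {N : ℕ}
    (s s' : (Fin N → F) × F)
    (hb : s'.2 + s.2 = 0 ∨ s'.2 + s.2 = d)
    (hx : ∀ j : Fin N, s'.1 j + s.1 j = 0 ∨ s'.1 j + s.1 j = d)
    (j : Fin N) :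
    (step f c s').1 j + s'.1 j = (step f c s).1 j + s.1 j := by
  have hy := yEq f d h2 hfd s s' hb hx j
  have hS : (s'.1 j + auxSeq f (xe s') s'.2 j) + (s.1 j + auxSeq f (xe s) s.2 j) = 0
      ∨ (s'.1 j + auxSeq f (xe s') s'.2 j) + (s.1 j + auxSeq f (xe s) s.2 j) = d := by
    have hrw : (s'.1 j + auxSeq f (xe s') s'.2 j) + (s.1 j + auxSeq f (xe s) s.2 j)
        = (s'.1 j + s.1 j) + (s'.2 + s.2) := by linear_combination hy
    rw [hrw]
    exact Dadd d h2 (hx j) hb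
  have hfE := gEq f d h2 hfd hS
  rw [step_fst, step_fst]
  linear_combination hfE

lemma stepSelfD (f : F → F) (d : F)
    (hg : ∀ s : F, f s + s = 0 ∨ f s + s = d) (c : F) {N : ℕ}
    (s : (Fin N → F) × F) (j : Fin N) :
    (step f c s).1 j + s.1 j = 0 ∨ (step f c s).1 j + s.1 j = d := by
  have hrw : (step f c s).1 j + s.1 j
      = f (s.1 j + auxSeq f (xe s) s.2 j) + (s.1 j + auxSeq f (xe s) s.2 j) := by
    rw [step_fst]; ring
  rw [hrw]
  exact hg _

lemma twoXD (f : F → F) (d : F) (h2 : ∀ z : F, z + z = 0)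
    (hg : ∀ s : F, f s + s = 0 ∨ f s + s = d) (c : F) {N : ℕ}
    (s : (Fin N → F) × F) (j : Fin N) :
    (step f c (step f c s)).1 j + s.1 j = 0
      ∨ (step f c (step f c s)).1 j + s.1 j = d := by
  have h1 := stepSelfD f d hg c s j
  have h2' := stepSelfD f d hg c (step f c s) j
  have hrw : (step f c (step f c s)).1 j + s.1 j
      = ((step f c (step f c s)).1 j + (step f c s).1 j)
        + ((step f c s).1 j + s.1 j) := by
    linear_combination - h2 ((step f c s).1 j)
  rw [hrw]
  exact Dadd d h2 h2' h1

lemma twoBD (f : F → F) (d : F) (h2 : ∀ z : F, z + z = 0)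
    (hg : ∀ s : F, f s + s = 0 ∨ f s + s = d) (c : F) {N : ℕ}
    (s : (Fin N → F) × F) :
    (step f c (step f c s)).2 + s.2 = 0
      ∨ (step f c (step f c s)).2 + s.2 = d := by
  have hu := auxD f d h2 hg (xe (step f c s)) (step f c s).2 N
  have hv := auxD f d h2 hg (xe s) s.2 N
  have e1 := step_snd f c (step f c s)
  have e2 := step_snd f c s
  have hrw : (step f c (step f c s)).2 + s.2
      = (auxSeq f (xe (step f c s)) (step f c s).2 N + (step f c s).2)
        + (auxSeq f (xe s) s.2 N + s.2) := by
    linear_combination e1 - e2 - h2 (auxSeq f (xe s) s.2 N)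
  rw [hrw]
  exact Dadd d h2 hu hv

end CA15

/-- Over `F₈`, if `f` is the single transposition `[a b]` of two distinct nonzero
elements and the boundary condition is modified to `b(t+1) = y_N(t) + c`, then the CA of
any size `N ≥ 1` satisfies `φ(4) = φ(0)`. -/
theorem stmt15 (a b : GaloisField 2 3) (ha : a ≠ 0) (hb : b ≠ 0) (hab : a ≠ b)
    (f : GaloisField 2 3 → GaloisField 2 3)
    (hfa : f a = b) (hfb : f b = a) (hother : ∀ x, x ≠ a → x ≠ b → f x = x)
    (c : GaloisField 2 3)
    (N : ℕ) (hN : 1 ≤ N) (φ0 : Fin N → GaloisField 2 3) (b0 : GaloisField 2 3) :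
    ((step f c)^[4] (φ0, b0)).1 = φ0 := by
  have h2 : ∀ z : GaloisField 2 3, z + z = 0 := by
    intro z
    have hc : (2 : GaloisField 2 3) = 0 := by
      exact_mod_cast CharP.cast_eq_zero (GaloisField 2 3) 2
    linear_combination z * hc
  have hg : ∀ s, f s + s = 0 ∨ f s + s = a + b := by
    intro s
    by_cases hsa : s = a
    · subst hsa; rw [hfa]; right; ring
    by_cases hsb : s = b
    · subst hsb; rw [hfb]; right; ring
    · rw [hother s hsa hsb]; left; exact h2 s
  have hfd : ∀ s, f (s + (a + b)) = f s + (a + b) := by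
    intro s
    by_cases hsa : s = a
    · have h : s + (a + b) = b := by rw [hsa]; linear_combination h2 a
      rw [h, hfb, hsa, hfa]
      linear_combination - h2 b
    by_cases hsb : s = b
    · have h : s + (a + b) = a := by rw [hsb]; linear_combination h2 b
      rw [h, hfa, hsb, hfb]
      linear_combination - h2 a
    · have h1 : s + (a + b) ≠ a := by
        intro h
        exact hsb (by linear_combination h - h2 b)
      have h1b : s + (a + b) ≠ b := by
        intro h
        exact hsa (by linear_combination h - h2 a)
      rw [hother _ h1 h1b, hother s hsa hsb]
  have hiter : (step f c)^[4] (φ0, b0)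
      = step f c (step f c (step f c (step f c (φ0, b0)))) := rfl
  rw [hiter]
  set s0 : (Fin N → GaloisField 2 3) × GaloisField 2 3 := (φ0, b0) with hs0
  set s1 := step f c s0 with hs1
  set s2 := step f c s1 with hs2
  set s3 := step f c s2 with hs3
  funext j
  have e20x : ∀ j : Fin N, s2.1 j + s0.1 j = 0 ∨ s2.1 j + s0.1 j = a + b := by
    intro j; rw [hs2, hs1]; exact CA15.twoXD f (a + b) h2 hg c s0 j
  have e20b : s2.2 + s0.2 = 0 ∨ s2.2 + s0.2 = a + b := by
    rw [hs2, hs1]; exact CA15.twoBD f (a + b) h2 hg c s0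
  have e31x : ∀ j : Fin N, s3.1 j + s1.1 j = 0 ∨ s3.1 j + s1.1 j = a + b := by
    intro j; rw [hs3, hs2]; exact CA15.twoXD f (a + b) h2 hg c s1 j
  have e31b : s3.2 + s1.2 = 0 ∨ s3.2 + s1.2 = a + b := by
    rw [hs3, hs2]; exact CA15.twoBD f (a + b) h2 hg c s1
  have inc1 : s3.1 j + s2.1 j = s1.1 j + s0.1 j := by
    rw [hs3, hs1]
    exact CA15.stepIncrEq f (a + b) h2 hfd c s0 s2 e20b e20x j
  have inc2 : (step f c s3).1 j + s3.1 j = s2.1 j + s1.1 j := by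
    rw [hs2]
    exact CA15.stepIncrEq f (a + b) h2 hfd c s1 s3 e31b e31x j
  have hφ : φ0 j = s0.1 j := rfl
  rw [hφ]
  linear_combination inc1 + inc2 - h2 (s3.1 j) + h2 (s1.1 j)
end

section
/- Let F₈ be the finite field with 8 elements, let f₀ : F₈ → F₈ be a single transposition of two distinct nonzero elements (fixing all other elements), let c ∈ F₈ be nonzero, and define f(x) = f₀(x + c). Consider the cellular automaton of size N ≥ 1 built from f with helical boundary condition. Then for every initial state φ(0) ∈ F₈^N and every initial boundary value b(0) ∈ F₈: if N is odd then φ(2) = φ(0), and if N is even then φ(4) = φ(0). -/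
lemma add01 {F : Type*} [Field F] (h2 : (2:F) = 0) {u v : F}
    (hu : u = 0 ∨ u = 1) (hv : v = 0 ∨ v = 1) : u + v = 0 ∨ u + v = 1 := by
  rcases hu with rfl | rfl <;> rcases hv with rfl | rfl
  · left; ring
  · right; ring
  · right; ring
  · left; linear_combination h2

lemma chi_shift {F : Type*} [Field F] (d : F) (χ : F → F)
    (hχd : ∀ s, χ (s + d) = χ s) (s u : F) (hu : u = 0 ∨ u = 1) :
    χ (s + d * u) = χ s := by
  rcases hu with rfl | rfl
  · simp
  · rw [mul_one, hχd]

lemma lemA {F : Type*} [Field F] (h2 : (2:F) = 0) (c d : F) (χ : F → F)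
    (hχ01 : ∀ s, χ s = 0 ∨ χ s = 1)
    (f : F → F) (hf : ∀ s, f s = s + c + d * χ s)
    (x : ℕ → F) (b : F) (i : ℕ) :
    ∃ ε, (ε = 0 ∨ ε = 1) ∧ auxSeq f x b i = b + (i : F) * c + d * ε := by
  induction i with
  | zero => exact ⟨0, Or.inl rfl, by simp [auxSeq]⟩
  | succ i ih =>
    obtain ⟨ε, hε, hy⟩ := ih
    refine ⟨ε + χ (x i + auxSeq f x b i), add01 h2 hε (hχ01 _), ?_⟩
    simp only [auxSeq]
    rw [hf]
    push_cast
    linear_combination (x i) * h2 + hy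

def extS {F : Type*} [Field F] {N : ℕ} (s : (Fin N → F) × F) : ℕ → F :=
  fun j => if h : j < N then s.1 ⟨j, h⟩ else 0

lemma extS_apply {F : Type*} [Field F] {N : ℕ} (s : (Fin N → F) × F) (j : Fin N) :
    extS s (j : ℕ) = s.1 j := by simp [extS]

lemma step_fst {F : Type*} [Field F] (f : F → F) {N : ℕ} (s : (Fin N → F) × F)
    (i : ℕ) (hi : i < N) :
    extS (step f 0 s) i =
      auxSeq f (extS s) s.2 i + f (extS s i + auxSeq f (extS s) s.2 i) := by
  simp only [extS, step, hi, dif_pos]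
  rfl

lemma step_snd {F : Type*} [Field F] (f : F → F) {N : ℕ} (s : (Fin N → F) × F) :
    (step f 0 s).2 = auxSeq f (extS s) s.2 N := by
  simp only [extS, step, add_zero]
  rfl

section Core
variable {F : Type*} [Field F]

lemma lemOdd (h2 : (2:F) = 0) (c d : F) (χ : F → F)
    (hχ01 : ∀ s, χ s = 0 ∨ χ s = 1) (hχd : ∀ s, χ (s + d) = χ s)
    (f : F → F) (hf : ∀ s, f s = s + c + d * χ s)
    (N : ℕ) (hNc : (N : F) * c = c)
    (x0 : ℕ → F) (b0 : F) (x1 : ℕ → F) (b1 : F)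
    (hx1 : ∀ i < N, x1 i = auxSeq f x0 b0 i + f (x0 i + auxSeq f x0 b0 i))
    (hb1 : b1 = auxSeq f x0 b0 N) :
    ∀ i < N, auxSeq f x1 b1 i + f (x1 i + auxSeq f x1 b1 i) = x0 i := by
  obtain ⟨ε, hε, hyN⟩ := lemA h2 c d χ hχ01 f hf x0 b0 N
  -- x1 in closed form
  have hx1' : ∀ i < N, x1 i = x0 i + c + d * χ (x0 i + auxSeq f x0 b0 i) := by
    intro i hi
    rw [hx1 i hi, hf]
    linear_combination (auxSeq f x0 b0 i) * h2
  -- key invariant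
  have key : ∀ i, i ≤ N → auxSeq f x1 b1 i = auxSeq f x0 b0 i + c + d * ε := by
    intro i
    induction i with
    | zero =>
      intro _
      show b1 = auxSeq f x0 b0 0 + c + d * ε
      show b1 = b0 + c + d * ε
      rw [hb1, hyN]
      linear_combination hNc
    | succ i ih =>
      intro hi1
      have hi : i < N := hi1
      have ihh := ih (Nat.le_of_lt hi)
      have hδ : χ (x0 i + auxSeq f x0 b0 i) + ε = 0 ∨
          χ (x0 i + auxSeq f x0 b0 i) + ε = 1 := add01 h2 (hχ01 _) hε
      have hs : x1 i + auxSeq f x1 b1 i =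
          (x0 i + auxSeq f x0 b0 i) + d * (χ (x0 i + auxSeq f x0 b0 i) + ε) := by
        rw [hx1' i hi, ihh]
        linear_combination c * h2
      have hχs : χ (x1 i + auxSeq f x1 b1 i) = χ (x0 i + auxSeq f x0 b0 i) := by
        rw [hs]; exact chi_shift d χ hχd _ _ hδ
      show x1 i + f (x1 i + auxSeq f x1 b1 i)
          = x0 i + f (x0 i + auxSeq f x0 b0 i) + c + d * ε
      rw [hf (x1 i + auxSeq f x1 b1 i), hf (x0 i + auxSeq f x0 b0 i), hχs]
      linear_combination hs + hx1' i hi + (d * χ (x0 i + auxSeq f x0 b0 i)) * h2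
  intro i hi
  have hδ : χ (x0 i + auxSeq f x0 b0 i) + ε = 0 ∨
      χ (x0 i + auxSeq f x0 b0 i) + ε = 1 := add01 h2 (hχ01 _) hε
  have hs : x1 i + auxSeq f x1 b1 i =
      (x0 i + auxSeq f x0 b0 i) + d * (χ (x0 i + auxSeq f x0 b0 i) + ε) := by
    rw [hx1' i hi, key i (Nat.le_of_lt hi)]
    linear_combination c * h2
  have hχs : χ (x1 i + auxSeq f x1 b1 i) = χ (x0 i + auxSeq f x0 b0 i) := by
    rw [hs]; exact chi_shift d χ hχd _ _ hδ
  rw [hf (x1 i + auxSeq f x1 b1 i), hχs]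
  linear_combination hs + key i (Nat.le_of_lt hi)
    + (c + d * χ (x0 i + auxSeq f x0 b0 i) + auxSeq f x0 b0 i + d * ε) * h2


lemma lemEven1 (h2 : (2:F) = 0) (c d : F) (χ : F → F)
    (hχ01 : ∀ s, χ s = 0 ∨ χ s = 1) (hχd : ∀ s, χ (s + d) = χ s)
    (f : F → F) (hf : ∀ s, f s = s + c + d * χ s)
    (N : ℕ) (hNc0 : (N : F) * c = 0)
    (x0 : ℕ → F) (b0 : F) (x1 : ℕ → F) (b1 : F)
    (hx1 : ∀ i < N, x1 i = auxSeq f x0 b0 i + f (x0 i + auxSeq f x0 b0 i))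
    (hb1 : b1 = auxSeq f x0 b0 N) :
    ∀ i ≤ N, ∃ ε, (ε = 0 ∨ ε = 1) ∧
      auxSeq f x1 b1 i = auxSeq f x0 b0 i + d * ε := by
  obtain ⟨ε, hε, hyN⟩ := lemA h2 c d χ hχ01 f hf x0 b0 N
  have hx1' : ∀ i < N, x1 i = x0 i + c + d * χ (x0 i + auxSeq f x0 b0 i) := by
    intro i hi
    rw [hx1 i hi, hf]
    linear_combination (auxSeq f x0 b0 i) * h2
  intro i
  induction i with
  | zero =>
    intro _
    refine ⟨ε, hε, ?_⟩
    show b1 = auxSeq f x0 b0 0 + d * ε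
    show b1 = b0 + d * ε
    rw [hb1, hyN]
    linear_combination hNc0
  | succ i ih =>
    intro hi1
    have hi : i < N := hi1
    obtain ⟨ε₁, hε₁, hy⟩ := ih (Nat.le_of_lt hi)
    have hs : x1 i + auxSeq f x1 b1 i =
        (x0 i + auxSeq f x0 b0 i + c) + d * (χ (x0 i + auxSeq f x0 b0 i) + ε₁) := by
      rw [hx1' i hi, hy]; ring
    have hχs : χ (x1 i + auxSeq f x1 b1 i) = χ (x0 i + auxSeq f x0 b0 i + c) := by
      rw [hs]; exact chi_shift d χ hχd _ _ (add01 h2 (hχ01 _) hε₁)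
    refine ⟨ε₁ + χ (x0 i + auxSeq f x0 b0 i) + χ (x0 i + auxSeq f x0 b0 i + c),
      add01 h2 (add01 h2 hε₁ (hχ01 _)) (hχ01 _), ?_⟩
    show x1 i + f (x1 i + auxSeq f x1 b1 i)
        = x0 i + f (x0 i + auxSeq f x0 b0 i) + d * _
    rw [hf (x1 i + auxSeq f x1 b1 i), hf (x0 i + auxSeq f x0 b0 i), hχs]
    linear_combination 2 * (hx1' i hi) + hy + c * h2

lemma lemEven2 (h2 : (2:F) = 0) (c d : F) (χ : F → F)
    (hχ01 : ∀ s, χ s = 0 ∨ χ s = 1) (hχd : ∀ s, χ (s + d) = χ s)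
    (f : F → F) (hf : ∀ s, f s = s + c + d * χ s)
    (N : ℕ) (hNc0 : (N : F) * c = 0)
    (x0 : ℕ → F) (b0 : F) (x1 : ℕ → F) (b1 : F)
    (hx1 : ∀ i < N, x1 i = auxSeq f x0 b0 i + f (x0 i + auxSeq f x0 b0 i))
    (hb1 : b1 = auxSeq f x0 b0 N) :
    ∀ i < N, auxSeq f x1 b1 i + f (x1 i + auxSeq f x1 b1 i) =
      x0 i + d * (χ (x0 i + auxSeq f x0 b0 i) + χ (x0 i + auxSeq f x0 b0 i + c)) := by
  intro i hi
  obtain ⟨ε₁, hε₁, hy⟩ :=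
    lemEven1 h2 c d χ hχ01 hχd f hf N hNc0 x0 b0 x1 b1 hx1 hb1 i (Nat.le_of_lt hi)
  have hx1' : x1 i = x0 i + c + d * χ (x0 i + auxSeq f x0 b0 i) := by
    rw [hx1 i hi, hf]
    linear_combination (auxSeq f x0 b0 i) * h2
  have hs : x1 i + auxSeq f x1 b1 i =
      (x0 i + auxSeq f x0 b0 i + c) + d * (χ (x0 i + auxSeq f x0 b0 i) + ε₁) := by
    rw [hx1', hy]; ring
  have hχs : χ (x1 i + auxSeq f x1 b1 i) = χ (x0 i + auxSeq f x0 b0 i + c) := by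
    rw [hs]; exact chi_shift d χ hχd _ _ (add01 h2 (hχ01 _) hε₁)
  rw [hf (x1 i + auxSeq f x1 b1 i), hχs]
  linear_combination hs + hy + (c + auxSeq f x0 b0 i + d * ε₁) * h2

lemma lemEven4 (h2 : (2:F) = 0) (c d : F) (χ : F → F)
    (hχ01 : ∀ s, χ s = 0 ∨ χ s = 1) (hχd : ∀ s, χ (s + d) = χ s)
    (f : F → F) (hf : ∀ s, f s = s + c + d * χ s)
    (N : ℕ) (hNc0 : (N : F) * c = 0)
    (x0 : ℕ → F) (b0 : F) (x1 : ℕ → F) (b1 : F)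
    (x2 : ℕ → F) (b2 : F) (x3 : ℕ → F) (b3 : F)
    (hx1 : ∀ i < N, x1 i = auxSeq f x0 b0 i + f (x0 i + auxSeq f x0 b0 i))
    (hb1 : b1 = auxSeq f x0 b0 N)
    (hx2 : ∀ i < N, x2 i = auxSeq f x1 b1 i + f (x1 i + auxSeq f x1 b1 i))
    (hb2 : b2 = auxSeq f x1 b1 N)
    (hx3 : ∀ i < N, x3 i = auxSeq f x2 b2 i + f (x2 i + auxSeq f x2 b2 i))
    (hb3 : b3 = auxSeq f x2 b2 N) :
    ∀ i < N, auxSeq f x3 b3 i + f (x3 i + auxSeq f x3 b3 i) = x0 i := by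
  intro i hi
  have hx2v : x2 i = x0 i +
      d * (χ (x0 i + auxSeq f x0 b0 i) + χ (x0 i + auxSeq f x0 b0 i + c)) :=
    (hx2 i hi).trans
      (lemEven2 h2 c d χ hχ01 hχd f hf N hNc0 x0 b0 x1 b1 hx1 hb1 i hi)
  have e42 := lemEven2 h2 c d χ hχ01 hχd f hf N hNc0 x2 b2 x3 b3 hx3 hb3 i hi
  obtain ⟨ε₁, hε₁, hy1⟩ :=
    lemEven1 h2 c d χ hχ01 hχd f hf N hNc0 x0 b0 x1 b1 hx1 hb1 i (Nat.le_of_lt hi)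
  obtain ⟨ε₂, hε₂, hy2⟩ :=
    lemEven1 h2 c d χ hχ01 hχd f hf N hNc0 x1 b1 x2 b2 hx2 hb2 i (Nat.le_of_lt hi)
  have hw : χ (x0 i + auxSeq f x0 b0 i) + χ (x0 i + auxSeq f x0 b0 i + c) + (ε₁ + ε₂) = 0 ∨
      χ (x0 i + auxSeq f x0 b0 i) + χ (x0 i + auxSeq f x0 b0 i + c) + (ε₁ + ε₂) = 1 :=
    add01 h2 (add01 h2 (hχ01 _) (hχ01 _)) (add01 h2 hε₁ hε₂)
  have hs2 : x2 i + auxSeq f x2 b2 i = (x0 i + auxSeq f x0 b0 i) +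
      d * (χ (x0 i + auxSeq f x0 b0 i) + χ (x0 i + auxSeq f x0 b0 i + c) + (ε₁ + ε₂)) := by
    rw [hx2v, hy2, hy1]; ring
  have hχa : χ (x2 i + auxSeq f x2 b2 i) = χ (x0 i + auxSeq f x0 b0 i) := by
    rw [hs2]; exact chi_shift d χ hχd _ _ hw
  have hχb : χ (x2 i + auxSeq f x2 b2 i + c) = χ (x0 i + auxSeq f x0 b0 i + c) := by
    rw [show x2 i + auxSeq f x2 b2 i + c = (x0 i + auxSeq f x0 b0 i + c) +
        d * (χ (x0 i + auxSeq f x0 b0 i) + χ (x0 i + auxSeq f x0 b0 i + c) + (ε₁ + ε₂)) from by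
      rw [hs2]; ring]
    exact chi_shift d χ hχd _ _ hw
  rw [e42, hχa, hχb, hx2v]
  linear_combination
    (d * (χ (x0 i + auxSeq f x0 b0 i) + χ (x0 i + auxSeq f x0 b0 i + c))) * h2


theorem mainOdd (h2 : (2:F) = 0) (c d : F) (χ : F → F)
    (hχ01 : ∀ s, χ s = 0 ∨ χ s = 1) (hχd : ∀ s, χ (s + d) = χ s)
    (f : F → F) (hf : ∀ s, f s = s + c + d * χ s)
    {N : ℕ} (hNc : (N : F) * c = c) (p : (Fin N → F) × F) :
    ((step f 0)^[2] p).1 = p.1 := by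
  funext j
  have key := lemOdd h2 c d χ hχ01 hχd f hf N hNc (extS p) p.2
      (extS (step f 0 p)) (step f 0 p).2
      (step_fst f p) (step_snd f p) j j.isLt
  have h0 : ((step f 0)^[2] p).1 j = extS (step f 0 (step f 0 p)) (j : ℕ) := by
    rw [show (step f 0)^[2] p = step f 0 (step f 0 p) from rfl, extS_apply]
  rw [h0, step_fst f (step f 0 p) j j.isLt, key]
  exact extS_apply p j

theorem mainEven (h2 : (2:F) = 0) (c d : F) (χ : F → F)
    (hχ01 : ∀ s, χ s = 0 ∨ χ s = 1) (hχd : ∀ s, χ (s + d) = χ s)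
    (f : F → F) (hf : ∀ s, f s = s + c + d * χ s)
    {N : ℕ} (hNc0 : (N : F) * c = 0) (p : (Fin N → F) × F) :
    ((step f 0)^[4] p).1 = p.1 := by
  funext j
  have key := lemEven4 h2 c d χ hχ01 hχd f hf N hNc0
      (extS p) p.2
      (extS (step f 0 p)) (step f 0 p).2
      (extS (step f 0 (step f 0 p))) (step f 0 (step f 0 p)).2
      (extS (step f 0 (step f 0 (step f 0 p)))) (step f 0 (step f 0 (step f 0 p))).2
      (step_fst f p) (step_snd f p)
      (step_fst f (step f 0 p)) (step_snd f (step f 0 p))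
      (step_fst f (step f 0 (step f 0 p))) (step_snd f (step f 0 (step f 0 p)))
      j j.isLt
  have h0 : ((step f 0)^[4] p).1 j =
      extS (step f 0 (step f 0 (step f 0 (step f 0 p)))) (j : ℕ) := by
    rw [show (step f 0)^[4] p = step f 0 (step f 0 (step f 0 (step f 0 p))) from rfl,
      extS_apply]
  rw [h0, step_fst f (step f 0 (step f 0 (step f 0 p))) j j.isLt, key]
  exact extS_apply p j

end Core


/-- Over `F₈`, let `f₀` be a single transposition of two distinct nonzero elements,
`c ≠ 0`, and `f(x) = f₀(x + c)`.  For the CA of size `N ≥ 1` with helical boundary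
condition: if `N` is odd then `φ(2) = φ(0)`, and if `N` is even then `φ(4) = φ(0)`. -/
theorem stmt16 (a b : GaloisField 2 3) (ha : a ≠ 0) (hb : b ≠ 0) (hab : a ≠ b)
    (f₀ : GaloisField 2 3 → GaloisField 2 3)
    (hfa : f₀ a = b) (hfb : f₀ b = a) (hother : ∀ x, x ≠ a → x ≠ b → f₀ x = x)
    (c : GaloisField 2 3) (hc : c ≠ 0)
    (N : ℕ) (hN : 1 ≤ N) (φ0 : Fin N → GaloisField 2 3) (b0 : GaloisField 2 3) :
    (Odd N → ((step (fun x => f₀ (x + c)) 0)^[2] (φ0, b0)).1 = φ0) ∧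
    (Even N → ((step (fun x => f₀ (x + c)) 0)^[4] (φ0, b0)).1 = φ0) := by
  classical
  have h2 : (2 : GaloisField 2 3) = 0 := by
    have := CharP.cast_eq_zero (GaloisField 2 3) 2
    exact_mod_cast this
  set d := a + b with hd
  set χ : GaloisField 2 3 → GaloisField 2 3 :=
    fun u => if u + c = a ∨ u + c = b then 1 else 0 with hχ
  have hχ01 : ∀ s, χ s = 0 ∨ χ s = 1 := by
    intro s
    by_cases h : s + c = a ∨ s + c = b <;> simp [hχ, h]
  have hχd : ∀ s, χ (s + d) = χ s := by
    intro s
    have hiff : (s + d + c = a ∨ s + d + c = b) ↔ (s + c = a ∨ s + c = b) := by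
      constructor
      · rintro (h | h)
        · right; linear_combination h - hd - b * h2
        · left; linear_combination h - hd - a * h2
      · rintro (h | h)
        · right; linear_combination h + hd + a * h2
        · left; linear_combination h + hd + b * h2
    simp only [hχ]
    rw [if_congr hiff rfl rfl]
  have hf : ∀ s : GaloisField 2 3, f₀ (s + c) = s + c + d * χ s := by
    intro s
    by_cases h1 : s + c = a
    · rw [h1, hfa]
      have hv : χ s = 1 := by simp [hχ, h1]
      rw [hv, mul_one]
      linear_combination -hd - a * h2
    · by_cases hb2 : s + c = b
      · rw [hb2, hfb]
        have hv : χ s = 1 := by simp [hχ, hb2]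
        rw [hv, mul_one]
        linear_combination -hd - b * h2
      · rw [hother (s + c) h1 hb2]
        have hv : χ s = 0 := by simp [hχ, h1, hb2]
        rw [hv, mul_zero, add_zero]
  constructor
  · intro hodd
    have hNc : ((N : ℕ) : GaloisField 2 3) * c = c := by
      obtain ⟨k, rfl⟩ := hodd
      push_cast
      linear_combination (k : GaloisField 2 3) * c * h2
    exact mainOdd h2 c d χ hχ01 hχd _ hf hNc (φ0, b0)
  · intro heven
    have hNc0 : ((N : ℕ) : GaloisField 2 3) * c = 0 := by
      obtain ⟨k, rfl⟩ := heven
      push_cast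
      linear_combination (k : GaloisField 2 3) * c * h2
    exact mainEven h2 c d χ hχ01 hχd _ hf hNc0 (φ0, b0)
end

section
/- Let F₈ be the finite field with 8 elements. (Case 1) Suppose there is a nonzero m ∈ F₈ such that f(0) = 0, f(m) = m, and f(x) = x + m for all x ∉ {0, m}; then the cellular automaton of any size N ≥ 1 built from f with helical boundary condition satisfies φ(2) = φ(0) for every initial state φ(0) ∈ F₈^N and boundary value b(0) ∈ F₈. (Case 2) Suppose there are nonzero m ∈ F₈ and k ∉ {0, m} such that f(0) = 0, f(m) = m, f(k) = k + m, f(k + m) = k, and f(x) = x + k for all x ∉ {0, m, k, k + m}; then the same cellular automaton satisfies φ(4) = φ(0) for every initial state and boundary value. -/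
/-- Core lemma: if `g(x) = x + f(x)` takes values in `H4` and is `H4`-periodic modulo
`H2` (where `H2 ⊆ H4` are additively closed sets containing `0`), then two steps of the
CA with helical boundary condition change the state and boundary only by elements
of `H2`. -/
lemma two_step {F : Type*} [Field F] (hc : (2:F) = 0)
    (f : F → F) (H2 H4 : Set F)
    (h20 : (0:F) ∈ H2) (h2add : ∀ a ∈ H2, ∀ b ∈ H2, a + b ∈ H2) (h24 : H2 ⊆ H4)
    (h4add : ∀ a ∈ H4, ∀ b ∈ H4, a + b ∈ H4)
    (P1 : ∀ x, x + f x ∈ H4)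
    (P3 : ∀ x h, h ∈ H4 → (x + h + f (x + h)) + (x + f x) ∈ H2)
    {N : ℕ} (φ : Fin N → F) (b : F) :
    ∃ (δ : Fin N → F) (μ : F), (∀ i, δ i ∈ H2) ∧ μ ∈ H2 ∧
      (step f 0)^[2] (φ, b) = (fun i => φ i + δ i, b + μ) := by
  classical
  set x : ℕ → F := fun j => if h : j < N then φ ⟨j, h⟩ else 0 with hxdef
  set Y : ℕ → F := auxSeq f x b with hYdef
  set φ' : Fin N → F := fun j => Y j + f (φ j + Y j) with hφ'def
  set x' : ℕ → F := fun j => if h : j < N then φ' ⟨j, h⟩ else 0 with hx'def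
  set Y' : ℕ → F := auxSeq f x' (Y N + 0) with hY'def
  have hstep2 : (step f 0)^[2] (φ, b)
      = (fun j : Fin N => Y' j + f (φ' j + Y' j), Y' N + 0) := rfl
  have hY0 : Y 0 = b := rfl
  have hYs : ∀ i, Y (i+1) = x i + f (x i + Y i) := fun i => rfl
  have hY'0 : Y' 0 = Y N + 0 := rfl
  have hY's : ∀ i, Y' (i+1) = x' i + f (x' i + Y' i) := fun i => rfl
  -- Y i + b ∈ H4
  have hyb : ∀ i, Y i + b ∈ H4 := by
    intro i
    induction i with
    | zero =>
        have h : Y 0 + b = 0 := by rw [hY0]; linear_combination b * hc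
        rw [h]; exact h24 h20
    | succ i ih =>
        have he : Y (i+1) + b = (Y i + b) + ((x i + Y i) + f (x i + Y i)) := by
          rw [hYs i]; linear_combination (-(Y i)) * hc
        rw [he]; exact h4add _ ih _ (P1 _)
  -- main induction on the differences D i = Y' i + Y i
  have key : ∀ i, i ≤ N →
      (Y' i + Y i) ∈ H4 ∧ (Y' i + Y i) + (Y' 0 + Y 0) ∈ H2 := by
    intro i
    induction i with
    | zero =>
        intro _
        constructor
        · have h : Y' 0 + Y 0 = Y N + b := by rw [hY'0, hY0]; ring
          rw [h]; exact hyb N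
        · have h : (Y' 0 + Y 0) + (Y' 0 + Y 0) = 0 := by
            linear_combination (Y' 0 + Y 0) * hc
          rw [h]; exact h20
    | succ i ih =>
        intro hiN
        have hi : i < N := hiN
        obtain ⟨h1, h2⟩ := ih (Nat.le_of_succ_le hiN)
        have hxi : x i = φ ⟨i, hi⟩ := by rw [hxdef]; exact dif_pos hi
        have hx'i : x' i = Y i + f (x i + Y i) := by
          rw [hx'def]
          simp only [dif_pos hi]
          rw [hφ'def, hxi]
        have harg : x' i + Y' i
            = (x i + Y i) + (((x i + Y i) + f (x i + Y i)) + (Y' i + Y i)) := by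
          rw [hx'i]; linear_combination (-(x i + Y i)) * hc
        have hfeq : f (x' i + Y' i)
            = f ((x i + Y i) + (((x i + Y i) + f (x i + Y i)) + (Y' i + Y i))) :=
          congrArg f harg
        have hhmem : ((x i + Y i) + f (x i + Y i)) + (Y' i + Y i) ∈ H4 :=
          h4add _ (P1 _) _ h1
        have hη := P3 (x i + Y i) _ hhmem
        have hstep : Y' (i+1) + Y (i+1)
            = (Y' i + Y i)
              + (((x i + Y i) + (((x i + Y i) + f (x i + Y i)) + (Y' i + Y i))
                  + f ((x i + Y i) + (((x i + Y i) + f (x i + Y i)) + (Y' i + Y i))))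
                 + ((x i + Y i) + f (x i + Y i))) := by
          rw [hY's i, hYs i, hfeq, hx'i]
          linear_combination (-(x i + 2*(Y i) + Y' i)) * hc
        constructor
        · rw [hstep]; exact h4add _ h1 _ (h24 hη)
        · have h3 : (Y' (i+1) + Y (i+1)) + (Y' 0 + Y 0)
              = ((Y' i + Y i) + (Y' 0 + Y 0))
                + (((x i + Y i) + (((x i + Y i) + f (x i + Y i)) + (Y' i + Y i))
                    + f ((x i + Y i) + (((x i + Y i) + f (x i + Y i)) + (Y' i + Y i))))
                   + ((x i + Y i) + f (x i + Y i))) := by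
            rw [hstep]; ring
          rw [h3]; exact h2add _ h2 _ hη
  refine ⟨fun j => (Y' (↑j+1) + Y (↑j+1)) + (Y' ↑j + Y ↑j),
    (Y' N + Y N) + (Y' 0 + Y 0), ?_, (key N le_rfl).2, ?_⟩
  · intro j
    show (Y' (↑j+1) + Y (↑j+1)) + (Y' ↑j + Y ↑j) ∈ H2
    have h : (Y' (↑j+1) + Y (↑j+1)) + (Y' ↑j + Y ↑j)
        = ((Y' (↑j+1) + Y (↑j+1)) + (Y' 0 + Y 0))
          + ((Y' ↑j + Y ↑j) + (Y' 0 + Y 0)) := by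
      linear_combination (-(Y' 0 + Y 0)) * hc
    rw [h]
    exact h2add _ (key (↑j+1) j.isLt).2 _ (key ↑j j.isLt.le).2
  · rw [hstep2]
    refine Prod.ext ?_ ?_
    · funext j
      show Y' ↑j + f (φ' j + Y' ↑j)
          = φ j + ((Y' (↑j+1) + Y (↑j+1)) + (Y' ↑j + Y ↑j))
      have hxj : x ↑j = φ j := by
        rw [hxdef]; simp only [Fin.is_lt, dif_pos, Fin.eta]
      have hx'j : x' ↑j = φ' j := by
        rw [hx'def]; simp only [Fin.is_lt, dif_pos, Fin.eta]
      rw [hY's ↑j, hYs ↑j, hx'j, hxj, hφ'def]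
      linear_combination (-(φ j + Y ↑j + f (φ j + Y ↑j))) * hc
    · show Y' N + 0 = b + ((Y' N + Y N) + (Y' 0 + Y 0))
      rw [hY'0, hY0]
      linear_combination (-(b + Y N)) * hc

/-- If `f(x + h) = f(x) + h` for all `h` in an additively closed set `H2`, then `step`
commutes with perturbing the state and boundary by elements of `H2`. -/
lemma step_equiv {F : Type*} [Field F] (hc : (2:F) = 0)
    (f : F → F) (H2 : Set F)
    (h2add : ∀ a ∈ H2, ∀ b ∈ H2, a + b ∈ H2)
    (P2 : ∀ x h, h ∈ H2 → f (x + h) = f x + h)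
    {N : ℕ} (φ : Fin N → F) (b : F) (δ : Fin N → F) (μ : F)
    (hδ : ∀ i, δ i ∈ H2) (hμ : μ ∈ H2) :
    step f 0 (fun i => φ i + δ i, b + μ)
      = (fun i => (step f 0 (φ, b)).1 i + δ i, (step f 0 (φ, b)).2 + μ) := by
  classical
  set x : ℕ → F := fun j => if h : j < N then φ ⟨j, h⟩ else 0 with hxdef
  set Y : ℕ → F := auxSeq f x b with hYdef
  set xt : ℕ → F := fun j => if h : j < N then φ ⟨j, h⟩ + δ ⟨j, h⟩ else 0 with hxtdef
  set Yt : ℕ → F := auxSeq f xt (b + μ) with hYtdef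
  have hL : step f 0 (fun i => φ i + δ i, b + μ)
      = (fun j : Fin N => Yt j + f ((φ j + δ j) + Yt j), Yt N + 0) := rfl
  have hR : (step f 0 (φ, b))
      = (fun j : Fin N => Y j + f (φ j + Y j), Y N + 0) := rfl
  have haux : ∀ i, i ≤ N → Yt i = Y i + μ := by
    intro i
    induction i with
    | zero => intro _; rfl
    | succ i ih =>
        intro hiN
        have hi : i < N := hiN
        have hYt : Yt (i+1) = xt i + f (xt i + Yt i) := rfl
        have hY : Y (i+1) = x i + f (x i + Y i) := rfl
        have hxi : x i = φ ⟨i, hi⟩ := by rw [hxdef]; exact dif_pos hi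
        have hxti : xt i = φ ⟨i, hi⟩ + δ ⟨i, hi⟩ := by rw [hxtdef]; exact dif_pos hi
        rw [hYt, hY, hxi, hxti, ih (Nat.le_of_succ_le hiN)]
        have harg : φ ⟨i, hi⟩ + δ ⟨i, hi⟩ + (Y i + μ)
            = (φ ⟨i, hi⟩ + Y i) + (δ ⟨i, hi⟩ + μ) := by ring
        rw [harg, P2 _ _ (h2add _ (hδ _) _ hμ)]
        linear_combination (δ ⟨i, hi⟩) * hc
  rw [hL, hR]
  refine Prod.ext ?_ ?_
  · funext j
    show Yt ↑j + f ((φ j + δ j) + Yt ↑j)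
        = (Y ↑j + f (φ j + Y ↑j)) + δ j
    rw [haux ↑j j.isLt.le]
    have harg : φ j + δ j + (Y ↑j + μ) = (φ j + Y ↑j) + (δ j + μ) := by ring
    rw [harg, P2 _ _ (h2add _ (hδ _) _ hμ)]
    linear_combination μ * hc
  · show Yt N + 0 = (Y N + 0) + μ
    rw [haux N le_rfl]; ring

/-- Two-fold iterate version of `step_equiv`. -/
lemma step_equiv2 {F : Type*} [Field F] (hc : (2:F) = 0)
    (f : F → F) (H2 : Set F)
    (h2add : ∀ a ∈ H2, ∀ b ∈ H2, a + b ∈ H2)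
    (P2 : ∀ x h, h ∈ H2 → f (x + h) = f x + h)
    {N : ℕ} (φ : Fin N → F) (b : F) (δ : Fin N → F) (μ : F)
    (hδ : ∀ i, δ i ∈ H2) (hμ : μ ∈ H2) :
    (step f 0)^[2] (fun i => φ i + δ i, b + μ)
      = (fun i => ((step f 0)^[2] (φ, b)).1 i + δ i, ((step f 0)^[2] (φ, b)).2 + μ) := by
  have h1 := step_equiv hc f H2 h2add P2 φ b δ μ hδ hμ
  have h2 := step_equiv hc f H2 h2add P2 (step f 0 (φ, b)).1 (step f 0 (φ, b)).2 δ μ hδ hμ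
  show step f 0 (step f 0 (fun i => φ i + δ i, b + μ)) = _
  rw [h1]
  exact h2

/-- Over `F₈`: (Case 1) if `f(0)=0`, `f(m)=m` (`m ≠ 0`) and `f(x)=x+m` elsewhere, the CA
of any size `N ≥ 1` with helical boundary condition satisfies `φ(2) = φ(0)`;
(Case 2) if `f(0)=0`, `f(m)=m`, `f(k)=k+m`, `f(k+m)=k` (`m ≠ 0`, `k ∉ {0,m}`) and
`f(x)=x+k` elsewhere, it satisfies `φ(4) = φ(0)`. -/
theorem stmt18 :
    (∀ (f : GaloisField 2 3 → GaloisField 2 3) (m : GaloisField 2 3), m ≠ 0 →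
      f 0 = 0 → f m = m → (∀ x, x ≠ 0 → x ≠ m → f x = x + m) →
      ∀ (N : ℕ), 1 ≤ N → ∀ (φ0 : Fin N → GaloisField 2 3) (b0 : GaloisField 2 3),
        ((step f 0)^[2] (φ0, b0)).1 = φ0) ∧
    (∀ (f : GaloisField 2 3 → GaloisField 2 3) (m k : GaloisField 2 3), m ≠ 0 →
      k ≠ 0 → k ≠ m → f 0 = 0 → f m = m → f k = k + m → f (k + m) = k →
      (∀ x, x ∉ ({0, m, k, k + m} : Set (GaloisField 2 3)) → f x = x + k) →
      ∀ (N : ℕ), 1 ≤ N → ∀ (φ0 : Fin N → GaloisField 2 3) (b0 : GaloisField 2 3),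
        ((step f 0)^[4] (φ0, b0)).1 = φ0) := by
  have hc : (2 : GaloisField 2 3) = 0 := by
    have := CharP.cast_eq_zero (GaloisField 2 3) 2
    simpa using this
  constructor
  · -- Case 1
    intro f m hm hf0 hfm hfe N hN φ0 b0
    obtain ⟨δ, μ, hδ, hμ, heq⟩ := two_step hc f ({0} : Set (GaloisField 2 3))
        ({0, m} : Set (GaloisField 2 3))
      rfl
      (by
        intro a ha b hb
        simp only [Set.mem_singleton_iff] at ha hb ⊢
        rw [ha, hb]; ring)
      (by
        intro z hz
        simp only [Set.mem_singleton_iff] at hz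
        subst hz
        exact Or.inl rfl)
      (by
        intro a ha b hb
        simp only [Set.mem_insert_iff, Set.mem_singleton_iff] at ha hb ⊢
        rcases ha with ha | ha <;> rcases hb with hb | hb <;> rw [ha, hb]
        · exact Or.inl (by ring)
        · exact Or.inr (by ring)
        · exact Or.inr (by ring)
        · exact Or.inl (by linear_combination m * hc))
      (by
        intro z
        simp only [Set.mem_insert_iff, Set.mem_singleton_iff]
        by_cases h0 : z = 0
        · subst h0; rw [hf0]; exact Or.inl (by ring)
        by_cases h1 : z = m
        · rw [h1, hfm]; exact Or.inl (by linear_combination m * hc)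
        · rw [hfe z h0 h1]; exact Or.inr (by linear_combination z * hc))
      (by
        intro z h hh
        simp only [Set.mem_insert_iff, Set.mem_singleton_iff] at hh
        simp only [Set.mem_singleton_iff]
        rcases hh with hh | hh <;> rw [hh]
        · rw [add_zero]; linear_combination (z + f z) * hc
        · by_cases h0 : z = 0
          · subst h0
            simp only [zero_add]
            rw [hfm, hf0]
            linear_combination m * hc
          by_cases h1 : z = m
          · have hmm : m + m = (0 : GaloisField 2 3) := by linear_combination m * hc
            rw [h1, hmm, hf0, hfm]
            linear_combination m * hc
          · have e0 : z + m ≠ 0 := fun he => h1 (by linear_combination he - m * hc)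
            have e1 : z + m ≠ m := fun he => h0 (by linear_combination he)
            rw [hfe z h0 h1, hfe (z + m) e0 e1]
            linear_combination (2*z + 2*m) * hc)
      φ0 b0
    rw [heq]
    funext i
    have h := hδ i
    simp only [Set.mem_singleton_iff] at h
    simp [h]
  · -- Case 2
    intro f m k hm hk0 hkm hf0 hfm hfk hfkm hfe N hN φ0 b0
    set H2 : Set (GaloisField 2 3) := {0, m} with hH2
    set H4 : Set (GaloisField 2 3) := {0, m, k, k + m} with hH4
    have h20 : (0 : GaloisField 2 3) ∈ H2 := Or.inl rfl
    have h2add : ∀ a ∈ H2, ∀ b ∈ H2, a + b ∈ H2 := by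
      intro a ha b hb
      simp only [hH2, Set.mem_insert_iff, Set.mem_singleton_iff] at ha hb ⊢
      rcases ha with ha | ha <;> rcases hb with hb | hb <;> rw [ha, hb]
      · exact Or.inl (by ring)
      · exact Or.inr (by ring)
      · exact Or.inr (by ring)
      · exact Or.inl (by linear_combination m * hc)
    have h24 : H2 ⊆ H4 := by
      intro z hz
      simp only [hH2, Set.mem_insert_iff, Set.mem_singleton_iff] at hz
      simp only [hH4, Set.mem_insert_iff, Set.mem_singleton_iff]
      tauto
    have h4add : ∀ a ∈ H4, ∀ b ∈ H4, a + b ∈ H4 := by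
      intro a ha b hb
      simp only [hH4, Set.mem_insert_iff, Set.mem_singleton_iff] at ha hb ⊢
      rcases ha with ha | ha | ha | ha <;> rcases hb with hb | hb | hb | hb <;>
        rw [ha, hb] <;>
        first
          | (left; ring1)
          | (left; linear_combination m * hc)
          | (left; linear_combination k * hc)
          | (left; linear_combination (k + m) * hc)
          | (right; left; ring1)
          | (right; left; linear_combination k * hc)
          | (right; right; left; ring1)
          | (right; right; left; linear_combination m * hc)
          | (right; right; right; ring1)
    have hcomp : ∀ z h', h' ∈ H4 → z + h' ∈ H4 → z ∈ H4 := by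
      intro z h' hh' hzh
      have hz : z = (z + h') + h' := by linear_combination (-h') * hc
      rw [hz]; exact h4add _ hzh _ hh'
    have gH2 : ∀ z ∈ H4, z + f z ∈ H2 := by
      intro z hz
      simp only [hH4, Set.mem_insert_iff, Set.mem_singleton_iff] at hz
      simp only [hH2, Set.mem_insert_iff, Set.mem_singleton_iff]
      rcases hz with hz | hz | hz | hz <;> rw [hz]
      · rw [hf0]; exact Or.inl (by ring)
      · rw [hfm]; exact Or.inl (by linear_combination m * hc)
      · rw [hfk]; exact Or.inr (by linear_combination k * hc)
      · rw [hfkm]; exact Or.inr (by linear_combination k * hc)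
    have P1 : ∀ z, z + f z ∈ H4 := by
      intro z
      by_cases hz : z ∈ H4
      · exact h24 (gH2 z hz)
      · rw [hfe z hz]
        simp only [hH4, Set.mem_insert_iff, Set.mem_singleton_iff]
        exact Or.inr (Or.inr (Or.inl (by linear_combination z * hc)))
    have P2 : ∀ z h', h' ∈ H2 → f (z + h') = f z + h' := by
      intro z h' hh'
      simp only [hH2, Set.mem_insert_iff, Set.mem_singleton_iff] at hh'
      rcases hh' with hh' | hh' <;> rw [hh']
      · rw [add_zero, add_zero]
      · by_cases h0 : z = 0
        · subst h0
          simp only [zero_add]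
          rw [hfm, hf0, zero_add]
        by_cases h1 : z = m
        · have hmm : m + m = (0 : GaloisField 2 3) := by linear_combination m * hc
          rw [h1, hmm, hf0, hfm]
          linear_combination (-m) * hc
        by_cases h2 : z = k
        · rw [h2, hfkm, hfk]
          linear_combination (-m) * hc
        by_cases h3 : z = k + m
        · have hkmm : k + m + m = k := by linear_combination m * hc
          rw [h3, hkmm, hfk, hfkm]
        · have hzH : z ∉ H4 := by
            simp only [hH4, Set.mem_insert_iff, Set.mem_singleton_iff]
            push_neg
            exact ⟨h0, h1, h2, h3⟩
          have hmH4 : m ∈ H4 := h24 (Or.inr rfl)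
          have hzmH : z + m ∉ H4 := fun hmem => hzH (hcomp z m hmH4 hmem)
          rw [hfe z hzH, hfe _ hzmH]
          ring
    have P3 : ∀ z h', h' ∈ H4 → (z + h' + f (z + h')) + (z + f z) ∈ H2 := by
      intro z h' hh'
      by_cases hz : z ∈ H4
      · exact h2add _ (gH2 _ (h4add z hz h' hh')) _ (gH2 z hz)
      · have hzh : z + h' ∉ H4 := fun hmem => hz (hcomp z h' hh' hmem)
        rw [hfe z hz, hfe _ hzh]
        simp only [hH2, Set.mem_insert_iff, Set.mem_singleton_iff]
        exact Or.inl (by linear_combination (2*z + h' + k) * hc)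
    obtain ⟨δ, μ, hδ, hμ, heq⟩ := two_step hc f H2 H4 h20 h2add h24 h4add P1 P3 φ0 b0
    have h4eq : (step f 0)^[4] (φ0, b0) = (step f 0)^[2] ((step f 0)^[2] (φ0, b0)) := by
      rw [show (4:ℕ) = 2 + 2 from rfl, Function.iterate_add_apply]
    rw [h4eq, heq, step_equiv2 hc f H2 h2add P2 φ0 b0 δ μ hδ hμ, heq]
    funext i
    show (φ0 i + δ i) + δ i = φ0 i
    linear_combination (δ i) * hc
end

section
/- Let F₈ be the finite field with 8 elements and let f : F₈ → F₈ be of one of the following two forms: (Case 1) there is a nonzero m with f(0) = 0, f(m) = m, and f(x) = x + m for all x ∉ {0, m}; or (Case 2) there are nonzero m and k ∉ {0, m} with f(0) = 0, f(m) = m, f(k) = k + m, f(k + m) = k, and f(x) = x + k for all x ∉ {0, m, k, k + m}. Let c ∈ F₈ and consider the cellular automaton of any size N ≥ 1 built from f with the modified boundary condition b(t+1) = y_N(t) + c. Then for every initial state φ(0) ∈ F₈^N and every initial boundary value b(0) ∈ F₈, one has φ(8) = φ(0). -/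
section CA

variable {F : Type*} [Field F]

/-- `h(s) = s + f(s)`. -/
def Hf (f : F → F) : F → F := fun s => s + f s

variable {N : ℕ}

def xev (σ : (Fin N → F) × F) : ℕ → F := fun j => if h : j < N then σ.1 ⟨j, h⟩ else 0

def Yv (f : F → F) (σ : (Fin N → F) × F) : ℕ → F := auxSeq f (xev σ) σ.2

def Sev (f : F → F) (σ : (Fin N → F) × F) : ℕ → F := fun j => xev σ j + Yv f σ j

def Ev (f : F → F) (c : F) (σ : (Fin N → F) × F) (j : ℕ) : F :=
  Hf f (Sev f σ j) + (∑ u ∈ Finset.range N, Hf f (Sev f σ u))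
    + (∑ u ∈ Finset.range j, Hf f (Sev f σ u))
    + (∑ u ∈ Finset.range j, Hf f (Sev f (step f c σ) u))

variable (h2 : ∀ a : F, a + a = 0) (f : F → F) (c : F)
include h2

lemma Yv_succ (σ : (Fin N → F) × F) (j : ℕ) :
    Yv f σ (j + 1) = Yv f σ j + Hf f (Sev f σ j) := by
  show xev σ j + f (xev σ j + Yv f σ j) = Yv f σ j + Hf f (Sev f σ j)
  unfold Hf Sev
  linear_combination - h2 (Yv f σ j)

lemma Yv_sum (σ : (Fin N → F) × F) (j : ℕ) :
    Yv f σ j = σ.2 + ∑ u ∈ Finset.range j, Hf f (Sev f σ u) := by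
  induction j with
  | zero => simp [Yv, auxSeq]
  | succ j ih => rw [Yv_succ h2, ih, Finset.sum_range_succ]; ring

omit h2 in
lemma step_fst_s19 (σ : (Fin N → F) × F) (j : Fin N) :
    (step f c σ).1 j = Yv f σ j + f (σ.1 j + Yv f σ j) := rfl

omit h2 in
lemma step_snd_s19 (σ : (Fin N → F) × F) : (step f c σ).2 = Yv f σ N + c := rfl

omit h2 in
lemma xev_fin (σ : (Fin N → F) × F) (j : Fin N) : xev σ (j : ℕ) = σ.1 j := by
  simp [xev, j.isLt]

lemma xev_step (σ : (Fin N → F) × F) (j : ℕ) (hj : j < N) :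
    xev (step f c σ) j = xev σ j + Hf f (Sev f σ j) := by
  have e1 : xev (step f c σ) j = Yv f σ j + f (σ.1 ⟨j, hj⟩ + Yv f σ j) := by
    show (if h : j < N then (step f c σ).1 ⟨j, h⟩ else 0) = _
    rw [dif_pos hj, step_fst_s19]
  have e2 : xev σ j = σ.1 ⟨j, hj⟩ := by simp [xev, hj]
  rw [e1, e2]
  unfold Hf Sev
  rw [e2]
  linear_combination - h2 (σ.1 ⟨j, hj⟩)

lemma Sev_step (σ : (Fin N → F) × F) (j : ℕ) (hj : j < N) :
    Sev f (step f c σ) j = Sev f σ j + c + Ev f c σ j := by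
  have eT : Sev f (step f c σ) j
      = xev σ j + Hf f (Sev f σ j) + (σ.2 + (∑ u ∈ Finset.range N, Hf f (Sev f σ u)) + c
          + ∑ u ∈ Finset.range j, Hf f (Sev f (step f c σ) u)) := by
    show xev (step f c σ) j + Yv f (step f c σ) j = _
    rw [xev_step h2 f c σ j hj, Yv_sum h2 f (step f c σ) j, step_snd_s19, Yv_sum h2 f σ N]
  have eS : Sev f σ j = xev σ j + (σ.2 + ∑ u ∈ Finset.range j, Hf f (Sev f σ u)) := by
    show xev σ j + Yv f σ j = _
    rw [Yv_sum h2 f σ j]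
  rw [eT]
  unfold Ev
  linear_combination - eS - h2 (∑ u ∈ Finset.range j, Hf f (Sev f σ u))

/-- `d` shifts arguments of `Hf f` by at most an element of `V`. -/
def Pv (f : F → F) (V : AddSubgroup F) (d : F) : Prop :=
  ∀ x : F, Hf f (x + d) + Hf f x ∈ V

variable (V : AddSubgroup F)

lemma Pv_zero : Pv f V 0 := by
  intro x
  have : Hf f (x + 0) + Hf f x = 0 := by rw [add_zero]; exact h2 _
  rw [this]; exact V.zero_mem

lemma Pv_add {d e : F} (hd : Pv f V d) (he : Pv f V e) : Pv f V (d + e) := by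
  intro x
  have key : Hf f (x + (d + e)) + Hf f x
      = (Hf f (x + d + e) + Hf f (x + d)) + (Hf f (x + d) + Hf f x) := by
    rw [← add_assoc x d e]
    linear_combination - h2 (Hf f (x + d))
  rw [key]
  exact V.add_mem (he (x + d)) (hd x)

variable (H2 : ∀ s t : F, Hf f (s + Hf f t) + Hf f s ∈ V)
include H2

omit h2 in
lemma Pv_Hf (t : F) : Pv f V (Hf f t) := fun x => H2 x t

lemma Pv_sum (g : ℕ → F) (n : ℕ) : Pv f V (∑ u ∈ Finset.range n, Hf f (g u)) := by
  induction n with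
  | zero => simpa using Pv_zero h2 f V
  | succ n ih =>
      rw [Finset.sum_range_succ]
      exact Pv_add h2 f V ih (Pv_Hf f V H2 (g n))

lemma Pv_Ev (σ : (Fin N → F) × F) (j : ℕ) : Pv f V (Ev f c σ j) := by
  unfold Ev
  exact Pv_add h2 f V (Pv_add h2 f V (Pv_add h2 f V (Pv_Hf f V H2 _)
    (Pv_sum h2 f V H2 _ N)) (Pv_sum h2 f V H2 _ j)) (Pv_sum h2 f V H2 _ j)

/-- Two-step difference of the diagonal sums. -/
def D2v (f : F → F) (c : F) (σ : (Fin N → F) × F) (j : ℕ) : F :=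
  Ev f c σ j + Ev f c (step f c σ) j

omit H2 in
lemma Sev_step2 (σ : (Fin N → F) × F) (j : ℕ) (hj : j < N) :
    Sev f (step f c (step f c σ)) j = Sev f σ j + D2v f c σ j := by
  rw [Sev_step h2 f c (step f c σ) j hj, Sev_step h2 f c σ j hj]
  unfold D2v
  linear_combination h2 c

lemma Pv_D2 (σ : (Fin N → F) × F) (j : ℕ) : Pv f V (D2v f c σ j) :=
  Pv_add h2 f V (Pv_Ev h2 f c V H2 σ j) (Pv_Ev h2 f c V H2 (step f c σ) j)

lemma HSe2 (σ : (Fin N → F) × F) (j : ℕ) (hj : j < N) :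
    Hf f (Sev f (step f c (step f c σ)) j) + Hf f (Sev f σ j) ∈ V := by
  rw [Sev_step2 h2 f c σ j hj]
  exact Pv_D2 h2 f c V H2 σ j (Sev f σ j)

omit h2 H2 in
lemma sum_pairV (g₁ g₂ : ℕ → F) (n : ℕ)
    (hterm : ∀ u < n, Hf f (g₁ u) + Hf f (g₂ u) ∈ V) :
    (∑ u ∈ Finset.range n, Hf f (g₁ u)) + (∑ u ∈ Finset.range n, Hf f (g₂ u)) ∈ V := by
  rw [← Finset.sum_add_distrib]
  exact V.sum_mem fun u hu => hterm u (Finset.mem_range.mp hu)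

lemma Ev_pairV (σ : (Fin N → F) × F) (j : ℕ) (hj : j < N) :
    Ev f c σ j + Ev f c (step f c (step f c σ)) j ∈ V := by
  have key : Ev f c σ j + Ev f c (step f c (step f c σ)) j
      = (Hf f (Sev f (step f c (step f c σ)) j) + Hf f (Sev f σ j))
        + (((∑ u ∈ Finset.range N, Hf f (Sev f (step f c (step f c σ)) u))
            + ∑ u ∈ Finset.range N, Hf f (Sev f σ u))
        + (((∑ u ∈ Finset.range j, Hf f (Sev f (step f c (step f c σ)) u))
            + ∑ u ∈ Finset.range j, Hf f (Sev f σ u))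
        + ((∑ u ∈ Finset.range j, Hf f (Sev f (step f c (step f c (step f c σ))) u))
            + ∑ u ∈ Finset.range j, Hf f (Sev f (step f c σ) u)))) := by
    unfold Ev
    ring
  rw [key]
  refine V.add_mem (HSe2 h2 f c V H2 σ j hj) (V.add_mem ?_ (V.add_mem ?_ ?_))
  · exact sum_pairV f V _ _ N fun u hu => HSe2 h2 f c V H2 σ u hu
  · exact sum_pairV f V _ _ j fun u hu => HSe2 h2 f c V H2 σ u (hu.trans hj)
  · exact sum_pairV f V _ _ j fun u hu => HSe2 h2 f c V H2 (step f c σ) u (hu.trans hj)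

lemma D2_pairV (σ : (Fin N → F) × F) (j : ℕ) (hj : j < N) :
    D2v f c σ j + D2v f c (step f c (step f c σ)) j ∈ V := by
  have key : D2v f c σ j + D2v f c (step f c (step f c σ)) j
      = (Ev f c σ j + Ev f c (step f c (step f c σ)) j)
        + (Ev f c (step f c σ) j + Ev f c (step f c (step f c (step f c σ))) j) := by
    unfold D2v
    ring
  rw [key]
  exact V.add_mem (Ev_pairV h2 f c V H2 σ j hj) (Ev_pairV h2 f c V H2 (step f c σ) j hj)

variable (H1 : ∀ s v : F, v ∈ V → Hf f (s + v) = Hf f s)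
include H1

lemma HSe4 (σ : (Fin N → F) × F) (j : ℕ) (hj : j < N) :
    Hf f (Sev f (step f c (step f c (step f c (step f c σ)))) j) = Hf f (Sev f σ j) := by
  have e4 : Sev f (step f c (step f c (step f c (step f c σ)))) j
      = Sev f σ j + (D2v f c σ j + D2v f c (step f c (step f c σ)) j) := by
    rw [Sev_step2 h2 f c (step f c (step f c σ)) j hj, Sev_step2 h2 f c σ j hj]
    ring
  rw [e4]
  exact H1 _ _ (D2_pairV h2 f c V H2 σ j hj)

omit V H1 H2 in
lemma xev_iter (σ : (Fin N → F) × F) (t j : ℕ) (hj : j < N) :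
    xev ((step f c)^[t] σ) j
      = xev σ j + ∑ u ∈ Finset.range t, Hf f (Sev f ((step f c)^[u] σ) j) := by
  induction t with
  | zero => simp
  | succ t ih =>
      rw [Function.iterate_succ_apply', xev_step h2 f c _ j hj, ih, Finset.sum_range_succ]
      ring

theorem general_eight (φ0 : Fin N → F) (b0 : F) :
    ((step f c)^[8] (φ0, b0)).1 = φ0 := by
  funext j
  set σ : (Fin N → F) × F := (φ0, b0) with hσ
  have hj : (j : ℕ) < N := j.isLt
  have hx : ((step f c)^[8] σ).1 j = xev ((step f c)^[8] σ) (j : ℕ) := (xev_fin _ j).symm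
  rw [hx, xev_iter h2 f c σ 8 (j : ℕ) hj]
  have key : ∀ u : ℕ, Hf f (Sev f ((step f c)^[4 + u] σ) (j : ℕ))
      = Hf f (Sev f ((step f c)^[u] σ) (j : ℕ)) := by
    intro u
    rw [Function.iterate_add_apply]
    have e : (step f c)^[4] ((step f c)^[u] σ)
        = step f c (step f c (step f c (step f c ((step f c)^[u] σ)))) := rfl
    rw [e]
    exact HSe4 h2 f c V H2 H1 ((step f c)^[u] σ) (j : ℕ) hj
  have hsum : ∑ u ∈ Finset.range 8, Hf f (Sev f ((step f c)^[u] σ) (j : ℕ)) = 0 := by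
    rw [Finset.sum_range_succ, Finset.sum_range_succ, Finset.sum_range_succ,
        Finset.sum_range_succ, Finset.sum_range_succ, Finset.sum_range_succ,
        Finset.sum_range_succ, Finset.sum_range_succ, Finset.sum_range_zero]
    rw [show (7:ℕ) = 4 + 3 from rfl, show (6:ℕ) = 4 + 2 from rfl,
        show (5:ℕ) = 4 + 1 from rfl, show (4:ℕ) = 4 + 0 from rfl,
        key 0, key 1, key 2, key 3]
    linear_combination h2 (Hf f (Sev f ((step f c)^[0] σ) (j : ℕ)))
      + h2 (Hf f (Sev f ((step f c)^[1] σ) (j : ℕ)))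
      + h2 (Hf f (Sev f ((step f c)^[2] σ) (j : ℕ)))
      + h2 (Hf f (Sev f ((step f c)^[3] σ) (j : ℕ)))
  rw [hsum, add_zero]
  exact xev_fin σ j

end CA

section Cases

variable {F : Type*} [Field F]

/-- The subgroup `{0, m}` of a field of characteristic two. -/
def Vm (m : F) (h2 : ∀ a : F, a + a = 0) : AddSubgroup F where
  carrier := {0, m}
  zero_mem' := Or.inl rfl
  add_mem' := by
    intro a b ha hb
    simp only [Set.mem_insert_iff, Set.mem_singleton_iff] at ha hb ⊢
    rcases ha with ha | ha <;> rcases hb with hb | hb <;> rw [ha, hb] <;> simp [h2 m]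
  neg_mem' := by
    intro a ha
    have : -a = a := neg_eq_of_add_eq_zero_left (h2 a)
    rwa [this]

lemma mem_Vm (m : F) (h2 : ∀ a : F, a + a = 0) (x : F) :
    x ∈ Vm m h2 ↔ x = 0 ∨ x = m := by
  show x ∈ ({0, m} : Set F) ↔ _
  simp

variable (h2 : ∀ a : F, a + a = 0)
include h2

lemma case1_sub (f : F → F) (m : F) (hm : m ≠ 0) (h0 : f 0 = 0) (hfm : f m = m)
    (hx : ∀ x, x ≠ 0 → x ≠ m → f x = x + m) :
    ∃ V : AddSubgroup F, (∀ s t : F, Hf f (s + Hf f t) + Hf f s ∈ V) ∧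
      (∀ s v : F, v ∈ V → Hf f (s + v) = Hf f s) := by
  have Hf0 : Hf f 0 = 0 := by unfold Hf; rw [h0]; ring
  have Hfm : Hf f m = 0 := by unfold Hf; rw [hfm]; exact h2 m
  have Hfo : ∀ x : F, x ≠ 0 → x ≠ m → Hf f x = m := by
    intro x a b
    unfold Hf
    rw [hx x a b]
    linear_combination h2 x
  have hconst : ∀ s : F, Hf f (s + m) = Hf f s := by
    intro s
    by_cases hs0 : s = 0
    · rw [hs0, zero_add, Hfm, Hf0]
    by_cases hsm : s = m
    · rw [hsm, h2 m, Hf0, Hfm]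
    have h1 : s + m ≠ 0 := fun h => hsm (by linear_combination h - h2 m)
    have h3 : s + m ≠ m := fun h => hs0 (by linear_combination h)
    rw [Hfo _ h1 h3, Hfo _ hs0 hsm]
  refine ⟨Vm m h2, ?_, ?_⟩
  · intro s t
    have rng : Hf f t = 0 ∨ Hf f t = m := by
      by_cases ht0 : t = 0
      · rw [ht0]; exact Or.inl Hf0
      by_cases htm : t = m
      · rw [htm]; exact Or.inl Hfm
      · exact Or.inr (Hfo t ht0 htm)
    rcases rng with h | h
    · rw [h, add_zero, h2 (Hf f s)]
      exact (Vm m h2).zero_mem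
    · rw [h, hconst s, h2 (Hf f s)]
      exact (Vm m h2).zero_mem
  · intro s v hv
    rcases (mem_Vm m h2 v).mp hv with hv | hv
    · rw [hv, add_zero]
    · rw [hv]; exact hconst s

lemma case2_sub (f : F → F) (m k : F) (hm : m ≠ 0) (hk : k ≠ 0) (hkm : k ≠ m)
    (h0 : f 0 = 0) (hfm : f m = m) (hfk : f k = k + m) (hfkm : f (k + m) = k)
    (hx : ∀ x, x ∉ ({0, m, k, k + m} : Set F) → f x = x + k) :
    ∃ V : AddSubgroup F, (∀ s t : F, Hf f (s + Hf f t) + Hf f s ∈ V) ∧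
      (∀ s v : F, v ∈ V → Hf f (s + v) = Hf f s) := by
  have Hf0 : Hf f 0 = 0 := by unfold Hf; rw [h0]; ring
  have Hfm : Hf f m = 0 := by unfold Hf; rw [hfm]; exact h2 m
  have Hfk : Hf f k = m := by unfold Hf; rw [hfk]; linear_combination h2 k
  have Hfkm : Hf f (k + m) = m := by unfold Hf; rw [hfkm]; linear_combination h2 k
  have Hfo : ∀ x : F, x ≠ 0 → x ≠ m → x ≠ k → x ≠ k + m → Hf f x = k := by
    intro x a b c d
    unfold Hf
    rw [hx x (by simp [a, b, c, d])]
    linear_combination h2 x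
  have hkm0 : k + m ≠ 0 := fun h => hkm (by linear_combination h - h2 m)
  have hconst : ∀ s : F, Hf f (s + m) = Hf f s := by
    intro s
    by_cases hs0 : s = 0
    · rw [hs0, zero_add, Hfm, Hf0]
    by_cases hsm : s = m
    · rw [hsm, h2 m, Hf0, Hfm]
    by_cases hsk : s = k
    · rw [hsk, Hfkm, Hfk]
    by_cases hskm : s = k + m
    · rw [hskm]
      have e : k + m + m = k := by linear_combination h2 m
      rw [e, Hfk, Hfkm]
    have h1 : s + m ≠ 0 := fun h => hsm (by linear_combination h - h2 m)
    have h3 : s + m ≠ m := fun h => hs0 (by linear_combination h)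
    have h4 : s + m ≠ k := fun h => hskm (by linear_combination h - h2 m)
    have h5 : s + m ≠ k + m := fun h => hsk (by linear_combination h)
    rw [Hfo _ h1 h3 h4 h5, Hfo _ hs0 hsm hsk hskm]
  have hconstk : ∀ s : F, Hf f (s + k) + Hf f s = 0 ∨ Hf f (s + k) + Hf f s = m := by
    intro s
    by_cases hs0 : s = 0
    · rw [hs0, zero_add, Hfk, Hf0, add_zero]; exact Or.inr rfl
    by_cases hsm : s = m
    · rw [hsm]
      have e : m + k = k + m := by ring
      rw [e, Hfkm, Hfm, add_zero]; exact Or.inr rfl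
    by_cases hsk : s = k
    · rw [hsk, h2 k, Hf0, Hfk, zero_add]; exact Or.inr rfl
    by_cases hskm : s = k + m
    · rw [hskm]
      have e : k + m + k = m := by linear_combination h2 k
      rw [e, Hfm, Hfkm, zero_add]; exact Or.inr rfl
    have h1 : s + k ≠ 0 := fun h => hsk (by linear_combination h - h2 k)
    have h3 : s + k ≠ m := fun h => hskm (by linear_combination h - h2 k)
    have h4 : s + k ≠ k := fun h => hs0 (by linear_combination h)
    have h5 : s + k ≠ k + m := fun h => hsm (by linear_combination h)
    rw [Hfo _ h1 h3 h4 h5, Hfo _ hs0 hsm hsk hskm]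
    exact Or.inl (h2 k)
  refine ⟨Vm m h2, ?_, ?_⟩
  · intro s t
    have rng : Hf f t = 0 ∨ Hf f t = m ∨ Hf f t = k := by
      by_cases ht0 : t = 0
      · rw [ht0]; exact Or.inl Hf0
      by_cases htm : t = m
      · rw [htm]; exact Or.inl Hfm
      by_cases htk : t = k
      · rw [htk]; exact Or.inr (Or.inl Hfk)
      by_cases htkm : t = k + m
      · rw [htkm]; exact Or.inr (Or.inl Hfkm)
      · exact Or.inr (Or.inr (Hfo t ht0 htm htk htkm))
    rcases rng with h | h | h
    · rw [h, add_zero, h2 (Hf f s)]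
      exact (Vm m h2).zero_mem
    · rw [h, hconst s, h2 (Hf f s)]
      exact (Vm m h2).zero_mem
    · rw [h, mem_Vm]
      exact hconstk s
  · intro s v hv
    rcases (mem_Vm m h2 v).mp hv with hv | hv
    · rw [hv, add_zero]
    · rw [hv]; exact hconst s

end Cases

/-- Over `F₈`, suppose `f` is (Case 1) `f(0)=0`, `f(m)=m` (`m ≠ 0`), `f(x)=x+m`
elsewhere, or (Case 2) `f(0)=0`, `f(m)=m`, `f(k)=k+m`, `f(k+m)=k` (`m ≠ 0`,
`k ∉ {0,m}`), `f(x)=x+k` elsewhere.  Then for every `c`, the CA of any size `N ≥ 1`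
with the modified boundary condition `b(t+1) = y_N(t) + c` satisfies `φ(8) = φ(0)`. -/
theorem stmt19 (f : GaloisField 2 3 → GaloisField 2 3)
    (hf : (∃ m : GaloisField 2 3, m ≠ 0 ∧ f 0 = 0 ∧ f m = m ∧
            ∀ x, x ≠ 0 → x ≠ m → f x = x + m) ∨
          (∃ m k : GaloisField 2 3, m ≠ 0 ∧ k ≠ 0 ∧ k ≠ m ∧ f 0 = 0 ∧ f m = m ∧
            f k = k + m ∧ f (k + m) = k ∧
            ∀ x, x ∉ ({0, m, k, k + m} : Set (GaloisField 2 3)) → f x = x + k))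
    (c : GaloisField 2 3)
    (N : ℕ) (hN : 1 ≤ N) (φ0 : Fin N → GaloisField 2 3) (b0 : GaloisField 2 3) :
    ((step f c)^[8] (φ0, b0)).1 = φ0 := by
  have h2 : ∀ a : GaloisField 2 3, a + a = 0 := fun a => CharTwo.add_self_eq_zero a
  rcases hf with ⟨m, hm, h0, hfm, hx⟩ | ⟨m, k, hm, hk, hkm, h0, hfm, hfk, hfkm, hx⟩
  · obtain ⟨V, H2, H1⟩ := case1_sub h2 f m hm h0 hfm hx
    exact general_eight h2 f c V H2 H1 φ0 b0
  · obtain ⟨V, H2, H1⟩ := case2_sub h2 f m k hm hk hkm h0 hfm hfk hfkm hx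
    exact general_eight h2 f c V H2 H1 φ0 b0
end
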